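/- arXiv:2502.07961 — 5 statements merged into one kernel-verified Lean document; each statement's English description precedes it below -/
import Mathlib

section
/- Fix an integer m ≥ 2 and a real δ > 0. There exist constants 0 < c < 1 < C depending only on m and δ such that for all integers n ≥ 2 and 2 ≤ b ≤ n, and every k-step edge-labeled self-avoiding path π^e with 1 ≤ k ≤ 4 log_ν n all of whose vertices lie in {b,…,n}: c^{(log n)²/b} · R ≤ ∏_{s=2}^n (α+p_s−1)_{p_s} (β_s+q_s−1)_{q_s} / (α+β_s+p_s+q_s−1)_{p_s+q_s} ≤ C^{(log n)²/b} · R, where R = ((m+δ)/(2m+δ))^{k−N_OY} ((m+1+δ)/(2m+δ))^{N_OY} ∏_{i=1}^k ( (π_{i−1}∧π_i)^{1−χ} (π_{i−1}∨π_i)^{χ} )^{−1}. -/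
open MeasureTheory Filter Set
open scoped ENNReal NNReal Classical

noncomputable section

namespace PAPaper

/-- The exponential growth parameter `ν` of the Pólya point tree. -/
def nuConst (m : ℕ) (δ : ℝ) : ℝ :=
  2 * (((m : ℝ) * ((m : ℝ) + δ) +
      Real.sqrt ((m : ℝ) * ((m : ℝ) - 1) * ((m : ℝ) + δ) * ((m : ℝ) + 1 + δ))) / δ)

/-- `α = m + δ`. -/
def alphaC (m : ℕ) (δ : ℝ) : ℝ := (m : ℝ) + δ

/-- `β_s = (2s-3)m + (s-1)δ`. -/
def betaC (m : ℕ) (δ : ℝ) (s : ℕ) : ℝ := (2 * (s : ℝ) - 3) * (m : ℝ) + ((s : ℝ) - 1) * δ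

/-- `χ = (m+δ)/(2m+δ)`. -/
def chiC (m : ℕ) (δ : ℝ) : ℝ := ((m : ℝ) + δ) / (2 * (m : ℝ) + δ)

/-- The falling factorial `(x)_r = x (x-1) ⋯ (x-r+1)`, with `(x)_0 = 1`. -/
def ff (x : ℝ) (r : ℕ) : ℝ := ∏ i ∈ Finset.range r, (x - i)

/-- The entries of a `(k+1)`-tuple, as a function of a natural number index. -/
def app {k : ℕ} {α : Type*} (f : Fin (k + 1) → α) (i : ℕ) : α :=
  f ⟨min i k, Nat.lt_succ_of_le (Nat.min_le_right i k)⟩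

/-- `(π, lab)` is a `k`-step edge-labeled path: labels lie in `{1, …, m}` and the pairs
(younger endpoint, label) are pairwise distinct. -/
def IsLabeledPath (m k : ℕ) (π : Fin (k + 1) → ℕ) (lab : Fin k → ℕ) : Prop :=
  (∀ h : Fin k, 1 ≤ lab h ∧ lab h ≤ m) ∧
  ∀ h h' : Fin k, h ≠ h' →
    (max (app π h.val) (app π (h.val + 1)), lab h) ≠
      (max (app π h'.val) (app π (h'.val + 1)), lab h')

/-- `p_s`: the number of steps of the path whose older endpoint is `s`. -/
def pcount (k : ℕ) (π : Fin (k + 1) → ℕ) (s : ℕ) : ℕ :=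
  (Finset.univ.filter fun h : Fin k => s = min (app π h.val) (app π (h.val + 1))).card

/-- `q_s`: the number of steps of the path strictly straddling `s`. -/
def qcount (k : ℕ) (π : Fin (k + 1) → ℕ) (s : ℕ) : ℕ :=
  (Finset.univ.filter fun h : Fin k =>
    min (app π h.val) (app π (h.val + 1)) < s ∧ s < max (app π h.val) (app π (h.val + 1))).card

/-- `N_OY`: the number of indices `i ∈ {1, …, k-1}` with labels `(lb_i, lb_{i+1}) = (O, Y)`,
i.e. `π_i ≤ π_{i-1}` and `π_i < π_{i+1}`. -/
def nOY (k : ℕ) (π : Fin (k + 1) → ℕ) : ℕ :=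
  ((Finset.Ico 1 k).filter fun i => app π i ≤ app π (i - 1) ∧ app π i < app π (i + 1)).card

/-- The quantity `R` of Statement 7. -/
def Rval (m : ℕ) (δ : ℝ) (k : ℕ) (π : Fin (k + 1) → ℕ) : ℝ :=
  (((m : ℝ) + δ) / (2 * (m : ℝ) + δ)) ^ (k - nOY k π) *
    (((m : ℝ) + 1 + δ) / (2 * (m : ℝ) + δ)) ^ nOY k π *
    ∏ i ∈ Finset.Icc 1 k,
      (((min (app π (i - 1)) (app π i) : ℕ) : ℝ) ^ (1 - chiC m δ) *
        ((max (app π (i - 1)) (app π i) : ℕ) : ℝ) ^ chiC m δ)⁻¹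

section Helpers

open Finset

/-- `app` at in-range indices. -/
lemma app_eq {k : ℕ} {α : Type*} (f : Fin (k+1) → α) {i : ℕ} (hi : i ≤ k) :
    app f i = f ⟨i, Nat.lt_succ_of_le hi⟩ := by
  unfold app
  congr 1
  exact Fin.ext (by simp [Nat.min_eq_left hi])

lemma app_inj {k : ℕ} {π : Fin (k+1) → ℕ} (hπ : Function.Injective π)
    {i j : ℕ} (hi : i ≤ k) (hj : j ≤ k) (h : app π i = app π j) : i = j := by
  rw [app_eq π hi, app_eq π hj] at h
  have := congrArg Fin.val (hπ h)
  simpa using this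

/-- rewriting of the falling factorial as a rising product. -/
lemma ff_eq (x : ℝ) (r : ℕ) : ff (x + r - 1) r = ∏ j ∈ Finset.range r, (x + j) := by
  rw [ff, ← Finset.prod_range_reflect]
  refine Finset.prod_congr rfl fun j hj => ?_
  rw [Finset.mem_range] at hj
  have h1 : 1 ≤ r - j := by omega
  have : (↑(r - 1 - j) : ℝ) = (r : ℝ) - 1 - j := by
    have : r - 1 - j = r - (j+1) := by omega
    rw [this, Nat.cast_sub (by omega)]
    push_cast; ring
  rw [this]; ring

/-- telescoping: `∑_{s∈Ioo u v} (log (s-1) - log s) = log u - log (v-1)`. -/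
lemma telescope_log (u v : ℕ) (hu : 1 ≤ u) (huv : u < v) :
    ∑ s ∈ Finset.Ioo u v, (Real.log ((s:ℝ) - 1) - Real.log s)
      = Real.log u - Real.log ((v:ℝ) - 1) := by
  have h1 : Finset.Ioo u v = Finset.Ico (u+1) v := rfl
  rw [h1, Finset.sum_Ico_eq_sum_range]
  have h2 : ∀ i, Real.log ((↑(u + 1 + i) : ℝ) - 1) - Real.log (↑(u + 1 + i) : ℝ)
      = (fun i : ℕ => Real.log ((u:ℝ) + (i:ℕ))) i - (fun i : ℕ => Real.log ((u:ℝ) + (i:ℕ))) (i+1) := by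
    intro i; simp only []; push_cast; ring_nf
  rw [Finset.sum_congr rfl fun i _ => h2 i, Finset.sum_range_sub']
  have : ((u:ℝ) + ↑(v - (u+1))) = (v:ℝ) - 1 := by
    rw [Nat.cast_sub (by omega)]; push_cast; ring
  rw [this]; simp

/-- telescoping bound `∑_{s∈Icc (b+1) n} (1/(s-1) - 1/s) ≤ 1/b`. -/
lemma telescope_inv (b n : ℕ) (hb : 1 ≤ b) :
    ∑ s ∈ Finset.Icc (b+1) n, ((1:ℝ)/((s:ℝ)-1) - 1/s) ≤ 1/b := by
  have h1 : Finset.Icc (b+1) n = Finset.Ico (b+1) (n+1) := by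
    rw [Finset.Ico_add_one_right_eq_Icc]
  rw [h1, Finset.sum_Ico_eq_sum_range]
  have h2 : ∀ i, (1:ℝ)/((↑(b + 1 + i) : ℝ) - 1) - 1/(↑(b + 1 + i):ℝ)
      = (fun i : ℕ => (1:ℝ)/((b:ℝ) + (i:ℕ))) i - (fun i : ℕ => (1:ℝ)/((b:ℝ) + (i:ℕ))) (i+1) := by
    intro i; simp only []; push_cast; ring_nf
  rw [Finset.sum_congr rfl fun i _ => h2 i, Finset.sum_range_sub']
  have hb' : (0:ℝ) < b := by exact_mod_cast hb
  have : (0:ℝ) ≤ 1/((b:ℝ) + ↑(n + 1 - (b+1))) := by positivity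
  simp only [Nat.cast_zero, add_zero]
  linarith

end Helpers
section Analytic

/-- two-sided elementary bounds for differences of logs. -/
lemma log_sub_log_bounds {x y : ℝ} (h0 : 0 < x) (hxy : x ≤ y) :
    (x - y)/x ≤ Real.log x - Real.log y ∧ Real.log x - Real.log y ≤ (x - y)/y := by
  have hy : 0 < y := lt_of_lt_of_le h0 hxy
  have hxy0 : 0 < x / y := div_pos h0 hy
  constructor
  · have h := Real.one_sub_inv_le_log_of_pos hxy0
    rw [Real.log_div (ne_of_gt h0) (ne_of_gt hy)] at h
    have : 1 - (x/y)⁻¹ = (x - y)/x := by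
      rw [inv_div]; field_simp
    linarith [this ▸ h]
  · have h := Real.log_le_sub_one_of_pos hxy0
    rw [Real.log_div (ne_of_gt h0) (ne_of_gt hy)] at h
    have : x/y - 1 = (x - y)/y := by field_simp
    linarith [this ▸ h]

/-- the p-factor estimate: `|log(γs - 2m + w) - log(γs)| ≤ 3K/s`. -/
lemma plog_bound (mR δ s w K : ℝ) (hm : 2 ≤ mR) (hδ : 0 < δ) (hs : 2 ≤ s)
    (hw : 0 ≤ w) (hwK : w ≤ 3*K) (hK : 1 ≤ K) :
    |Real.log ((2*mR+δ)*s - 2*mR + w) - Real.log ((2*mR+δ)*s)| ≤ 3*K/s := by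
  set γ := 2*mR+δ with hγ
  have hγ4 : 4 ≤ γ := by rw [hγ]; linarith
  have hs0 : 0 < s := by linarith
  have hb0 : 0 < γ*s := by nlinarith
  have ha0 : 0 < γ*s - 2*mR := by nlinarith
  have ha0' : 0 < γ*s - 2*mR + w := by linarith
  rw [abs_le]
  have haux : mR*s ≤ γ*s - 2*mR := by nlinarith
  constructor
  · rcases le_or_gt (γ*s) (γ*s - 2*mR + w) with h | h
    · have h1 : Real.log (γ*s) ≤ Real.log (γ*s - 2*mR + w) := Real.log_le_log hb0 h
      have h2 : (0:ℝ) ≤ 3*K/s := by positivity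
      linarith
    · have h1 := (log_sub_log_bounds ha0' h.le).1
      have h2 : -(3*K)/s ≤ ((γ*s - 2*mR + w) - γ*s)/(γ*s - 2*mR + w) := by
        rw [div_le_div_iff₀ hs0 ha0']
        nlinarith
      have h3 : -(3*K/s) = -(3*K)/s := by ring
      linarith
  · rcases le_or_gt (γ*s - 2*mR + w) (γ*s) with h | h
    · have h1 : Real.log (γ*s - 2*mR + w) ≤ Real.log (γ*s) := Real.log_le_log ha0' h
      have h2 : (0:ℝ) ≤ 3*K/s := by positivity
      linarith
    · have h1 := (log_sub_log_bounds hb0 h.le).1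
      have h2 : ((γ*s - 2*mR + w) - γ*s)/(γ*s) ≤ 3*K/s := by
        rw [div_le_div_iff₀ hb0 hs0]
        nlinarith [mul_le_mul_of_nonneg_right hwK hs0.le,
          mul_nonneg (mul_nonneg (by linarith : (0:ℝ) ≤ 3*K) hs0.le)
            (by linarith : (0:ℝ) ≤ γ - 1)]
      have h3 : (γ*s - (γ*s - 2*mR + w))/(γ*s) = -(((γ*s - 2*mR + w) - γ*s)/(γ*s)) := by
        ring
      linarith
end Analytic
section Analytic2

set_option maxHeartbeats 1000000 in
/-- the q-factor estimate. -/
lemma qlog_bound (mR δ s j : ℝ) (hm : 2 ≤ mR) (hδ : 0 < δ) (hs : 3 ≤ s) (hj : 0 ≤ j) :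
    |Real.log ((2*mR+δ)*s - 2*mR + j - (mR+δ)) - Real.log ((2*mR+δ)*s - 2*mR + j)
      - (mR+δ)/(2*mR+δ) * (Real.log (s-1) - Real.log s)|
      ≤ 8*(mR+δ+1)*(1+j)/s^2 := by
  set γ := 2*mR+δ with hγdef
  set α := mR+δ with hαdef
  set χ := (mR+δ)/(2*mR+δ) with hχdef
  set D := γ*s - 2*mR + j with hDdef
  have hγ4 : 4 ≤ γ := by rw [hγdef]; linarith
  have hγ0 : 0 < γ := by linarith
  have hα0 : 0 < α := by rw [hαdef]; linarith
  have hαγ : α < γ := by rw [hαdef, hγdef]; linarith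
  have hχ0 : 0 < χ := div_pos hα0 hγ0
  have hχ1 : χ ≤ 1 := by
    rw [hχdef, div_le_one hγ0]; linarith
  have hs0 : 0 < s := by linarith
  have hs1 : 0 < s - 1 := by linarith
  have hs2 : s/2 ≤ s - 1 := by linarith
  have hD2 : γ*s/2 ≤ D := by rw [hDdef]; nlinarith
  have hD0 : 0 < D := by nlinarith
  have hDα2 : γ*s/2 ≤ D - α := by rw [hDdef, hαdef, hγdef]; nlinarith
  have hDα0 : 0 < D - α := by nlinarith
  have hs2' : s^2 ≤ (s-1)*D := by nlinarith
  have hs2'' : s^2 ≤ s*(D - α) := by nlinarith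
  -- sandwich for log (D-α) - log D
  have hA := log_sub_log_bounds hDα0 (by linarith : D - α ≤ D)
  have hA1 : Real.log (D-α) - Real.log D ≤ -α/D := by
    have : (D - α - D)/D = -α/D := by ring
    linarith [this ▸ hA.2]
  have hA2 : -α/(D-α) ≤ Real.log (D-α) - Real.log D := by
    have : (D - α - D)/(D-α) = -α/(D-α) := by ring
    linarith [this ▸ hA.1]
  -- sandwich for log (s-1) - log s
  have hB := log_sub_log_bounds hs1 (by linarith : s - 1 ≤ s)
  have hB1 : Real.log (s-1) - Real.log s ≤ -1/s := by
    have : (s - 1 - s)/s = -1/s := by ring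
    linarith [this ▸ hB.2]
  have hB2 : -1/(s-1) ≤ Real.log (s-1) - Real.log s := by
    have : (s - 1 - s)/(s-1) = -1/(s-1) := by ring
    linarith [this ▸ hB.1]
  rw [abs_le]
  constructor
  · -- lower bound: -(K(1+j)/s²) ≤ Diff
    have hc1 : χ * (Real.log (s-1) - Real.log s) ≤ χ * (-1/s) :=
      mul_le_mul_of_nonneg_left hB1 hχ0.le
    -- Diff ≥ -α/(D-α) + χ/s
    have hkey : -(8*(mR+δ+1)*(1+j)/s^2) ≤ -α/(D-α) + χ/s := by
      have hid : -α/(D-α) + χ/s = χ*(j - (3*mR+δ))/(s*(D-α)) := by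
        have hχγ : χ*γ = mR+δ := by rw [hχdef, hγdef]; exact div_mul_cancel₀ _ (by linarith)
        rw [div_add_div _ _ hDα0.ne' hs0.ne', div_eq_div_iff (mul_pos hDα0 hs0).ne' (mul_pos hs0 hDα0).ne']
        rw [hDdef, hαdef]
        linear_combination (γ*s - 2*mR + j - (mR+δ))*s*s*hχγ
      rw [hid]
      have hd1 : χ*(3*mR+δ)*(1+j)/(s*(D-α)) ≤ 8*(mR+δ+1)*(1+j)/s^2 := by
        apply div_le_div₀ (by positivity) ?_ (by positivity) hs2''
        nlinarith [mul_nonneg (mul_nonneg (by linarith : (0:ℝ) ≤ 1 - χ)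
            (by linarith : (0:ℝ) ≤ 3*mR+δ)) (by linarith : (0:ℝ) ≤ 1+j),
          mul_nonneg (by linarith : (0:ℝ) ≤ 5*mR+7*δ+8) (by linarith : (0:ℝ) ≤ 1+j)]
      have hd2 : (-(χ*(3*mR+δ)*(1+j)))/(s*(D-α)) ≤ χ*(j - (3*mR+δ))/(s*(D-α)) := by
        apply (div_le_div_iff_of_pos_right (by positivity)).mpr
        nlinarith [mul_nonneg hχ0.le (mul_nonneg hj (show (0:ℝ) ≤ 1+3*mR+δ by linarith))]
      have hd3 : (-(χ*(3*mR+δ)*(1+j)))/(s*(D-α)) = -(χ*(3*mR+δ)*(1+j)/(s*(D-α))) := by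
        ring
      linarith
    have : χ*(-1/s) = -(χ/s) := by ring
    nlinarith [hA2, hc1, hkey]
  · -- upper bound
    have hc2 : χ * (-1/(s-1)) ≤ χ * (Real.log (s-1) - Real.log s) :=
      mul_le_mul_of_nonneg_left hB2 hχ0.le
    have hkey : -α/D + χ/(s-1) ≤ 8*(mR+δ+1)*(1+j)/s^2 := by
      have hid : -α/D + χ/(s-1) = χ*(δ+j)/((s-1)*D) := by
        have hχγ : χ*γ = mR+δ := by rw [hχdef, hγdef]; exact div_mul_cancel₀ _ (by linarith)
        rw [div_add_div _ _ hD0.ne' hs1.ne', div_eq_div_iff (mul_pos hD0 hs1).ne' (mul_pos hs1 hD0).ne']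
        rw [hDdef, hαdef]
        linear_combination (γ*s - 2*mR + j)*(s-1)*(s-1)*hχγ
      rw [hid]
      apply div_le_div₀ (by positivity) ?_ (by positivity) hs2'
      nlinarith [mul_nonneg (mul_nonneg (by linarith : (0:ℝ) ≤ 1 - χ)
          (by linarith : (0:ℝ) ≤ δ+j)) (by linarith : (0:ℝ) ≤ (1:ℝ)),
        mul_nonneg (by linarith : (0:ℝ) ≤ 8*(mR+δ+1) - 1) (by linarith : (0:ℝ) ≤ 1+j),
        mul_nonneg (by linarith : (0:ℝ) ≤ 1 - χ) hj]
    have : χ*(-1/(s-1)) = -(χ/(s-1)) := by ring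
    nlinarith [hA1, hc2, hkey]

end Analytic2
section Combinatorial

open Finset

variable {k n b : ℕ} {π : Fin (k+1) → ℕ}

/-- the younger (smaller) endpoint of step `i`. -/
def eU (k : ℕ) (π : Fin (k+1) → ℕ) (i : ℕ) : ℕ := min (app π i) (app π (i+1))

/-- the older (larger) endpoint of step `i`. -/
def eV (k : ℕ) (π : Fin (k+1) → ℕ) (i : ℕ) : ℕ := max (app π i) (app π (i+1))

lemma eU_lt_eV (hinj : Function.Injective π) {i : ℕ} (hi : i < k) :
    eU k π i < eV k π i := by
  have hne : app π i ≠ app π (i+1) := fun h => by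
    have := app_inj hinj (le_of_lt hi) (by omega) h; omega
  rcases lt_or_gt_of_ne hne with h | h
  · rwa [eU, eV, min_eq_left h.le, max_eq_right h.le]
  · rwa [eU, eV, min_eq_right h.le, max_eq_left h.le]

lemma eUV_mem (hrange : ∀ i, i ≤ k → b ≤ app π i ∧ app π i ≤ n) {i : ℕ} (hi : i < k) :
    b ≤ eU k π i ∧ eU k π i ≤ n ∧ b ≤ eV k π i ∧ eV k π i ≤ n := by
  have h1 := hrange i (le_of_lt hi)
  have h2 := hrange (i+1) (by omega)
  refine ⟨le_min h1.1 h2.1, le_trans (min_le_left _ _) h1.2,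
    le_trans h1.1 (le_max_left _ _), max_le h1.2 h2.2⟩

lemma pcount_eq_card (s : ℕ) :
    pcount k π s = (Finset.univ.filter fun h : Fin k => s = eU k π h.val).card := rfl

lemma qcount_eq_card (s : ℕ) :
    qcount k π s
      = (Finset.univ.filter fun h : Fin k => eU k π h.val < s ∧ s < eV k π h.val).card := rfl

/-- regrouping the `p`-weighted sums per edge. -/
lemma sum_pcount_mul (hb : 2 ≤ b)
    (hrange : ∀ i, i ≤ k → b ≤ app π i ∧ app π i ≤ n) (t : ℕ → ℝ) :
    ∑ s ∈ Finset.Icc 2 n, (pcount k π s : ℝ) * t s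
      = ∑ i ∈ Finset.range k, t (eU k π i) := by
  have step : ∀ s, (pcount k π s : ℝ) * t s
      = ∑ h : Fin k, if s = eU k π h.val then t s else 0 := by
    intro s
    rw [pcount_eq_card, ← Finset.sum_filter, Finset.sum_const, nsmul_eq_mul]
  rw [Finset.sum_congr rfl fun s _ => step s, Finset.sum_comm]
  rw [← Fin.sum_univ_eq_sum_range (fun i => t (eU k π i)) k]
  refine Finset.sum_congr rfl fun h _ => ?_
  rw [Finset.sum_ite_eq' (Finset.Icc 2 n) (eU k π h.val) (fun s => t s)]
  have hm := eUV_mem hrange h.isLt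
  have hmem : eU k π h.val ∈ Finset.Icc 2 n := by
    rw [Finset.mem_Icc]; omega
  simp [hmem]

/-- regrouping the `q`-weighted sums per edge. -/
lemma sum_qcount_mul (hb : 2 ≤ b)
    (hrange : ∀ i, i ≤ k → b ≤ app π i ∧ app π i ≤ n) (t : ℕ → ℝ) :
    ∑ s ∈ Finset.Icc 2 n, (qcount k π s : ℝ) * t s
      = ∑ i ∈ Finset.range k, ∑ s ∈ Finset.Ioo (eU k π i) (eV k π i), t s := by
  have step : ∀ s, (qcount k π s : ℝ) * t s
      = ∑ h : Fin k, if eU k π h.val < s ∧ s < eV k π h.val then t s else 0 := by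
    intro s
    rw [qcount_eq_card, ← Finset.sum_filter, Finset.sum_const, nsmul_eq_mul]
  rw [Finset.sum_congr rfl fun s _ => step s, Finset.sum_comm]
  rw [← Fin.sum_univ_eq_sum_range (fun i => ∑ s ∈ Finset.Ioo (eU k π i) (eV k π i), t s) k]
  refine Finset.sum_congr rfl fun h _ => ?_
  rw [← Finset.sum_filter]
  refine Finset.sum_congr ?_ fun _ _ => rfl
  ext s
  have hm := eUV_mem hrange h.isLt
  simp only [Finset.mem_filter, Finset.mem_Icc, Finset.mem_Ioo]
  omega

/-- `∑ p_s = k` (with weight 1). -/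
lemma sum_pcount (hb : 2 ≤ b)
    (hrange : ∀ i, i ≤ k → b ≤ app π i ∧ app π i ≤ n) :
    ∑ s ∈ Finset.Icc 2 n, (pcount k π s : ℝ) = k := by
  have := sum_pcount_mul (n := n) hb hrange (fun _ => (1:ℝ))
  simpa using this

/-- each `s` is the younger endpoint of at most two steps. -/
lemma pcount_le_two (hinj : Function.Injective π) (s : ℕ) : pcount k π s ≤ 2 := by
  rw [pcount_eq_card]
  set F := Finset.univ.filter fun h : Fin k => s = eU k π h.val with hF
  rcases F.eq_empty_or_nonempty with he | ⟨h₀, hh₀⟩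
  · simp [he]
  have hpos : ∀ h : Fin k, h ∈ F → app π h.val = s ∨ app π (h.val+1) = s := by
    intro h hh
    rw [hF, Finset.mem_filter] at hh
    have h2 : s = app π h.val ⊓ app π (h.val+1) := hh.2
    rcases min_choice (app π h.val) (app π (h.val+1)) with he | he
    · exact Or.inl (by omega)
    · exact Or.inr (by omega)
  obtain ⟨t, htk, hts⟩ : ∃ t, t ≤ k ∧ app π t = s := by
    rcases hpos h₀ hh₀ with he | he
    · exact ⟨h₀.val, by omega, he⟩
    · exact ⟨h₀.val + 1, by omega, he⟩
  have hsub : F ⊆ (Finset.univ.filter fun h : Fin k => h.val = t)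
      ∪ (Finset.univ.filter fun h : Fin k => h.val + 1 = t) := by
    intro h hh
    rcases hpos h hh with he | he
    · have := app_inj hinj (by omega : h.val ≤ k) htk (he.trans hts.symm)
      simp [Finset.mem_union, Finset.mem_filter, this]
    · have := app_inj hinj (by omega : h.val + 1 ≤ k) htk (he.trans hts.symm)
      simp [Finset.mem_union, Finset.mem_filter, this]
  refine le_trans (Finset.card_le_card hsub) (le_trans (Finset.card_union_le _ _) ?_)
  have c1 : (Finset.univ.filter fun h : Fin k => h.val = t).card ≤ 1 :=
    Finset.card_le_one.mpr fun a ha b hb => by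
      simp only [Finset.mem_filter] at ha hb
      exact Fin.ext (ha.2.trans hb.2.symm)
  have c2 : (Finset.univ.filter fun h : Fin k => h.val + 1 = t).card ≤ 1 :=
    Finset.card_le_one.mpr fun a ha b hb => by
      simp only [Finset.mem_filter] at ha hb
      exact Fin.ext (by omega)
  omega

lemma pcount_pos_range (hb : 2 ≤ b)
    (hrange : ∀ i, i ≤ k → b ≤ app π i ∧ app π i ≤ n) {s : ℕ}
    (hs : 0 < pcount k π s) : b ≤ s ∧ s ≤ n := by
  rw [pcount_eq_card, Finset.card_pos] at hs
  obtain ⟨h, hh⟩ := hs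
  rw [Finset.mem_filter] at hh
  have := eUV_mem hrange h.isLt
  omega

lemma qcount_pos_range (hb : 2 ≤ b)
    (hrange : ∀ i, i ≤ k → b ≤ app π i ∧ app π i ≤ n) {s : ℕ}
    (hs : 0 < qcount k π s) : b < s ∧ s ≤ n := by
  rw [qcount_eq_card, Finset.card_pos] at hs
  obtain ⟨h, hh⟩ := hs
  rw [Finset.mem_filter] at hh
  have := eUV_mem hrange h.isLt
  omega

lemma qcount_le (hinj : Function.Injective π) (s : ℕ) : qcount k π s ≤ k := by
  rw [qcount_eq_card]
  exact le_trans (Finset.card_filter_le _ _) (by simp)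

end Combinatorial
section NOY

open Finset

variable {k n b : ℕ} {π : Fin (k+1) → ℕ}

lemma step_min_choice (hs : s = eU k π h) : app π h = s ∨ app π (h+1) = s := by
  have h2 : s = app π h ⊓ app π (h+1) := hs
  rcases min_choice (app π h) (app π (h+1)) with he | he
  · exact Or.inl (by omega)
  · exact Or.inr (by omega)

lemma pcount_at_OY (hinj : Function.Injective π) {i : ℕ} (hi1 : 1 ≤ i) (hik : i < k)
    (hO : app π i ≤ app π (i - 1)) (hY : app π i < app π (i+1)) :
    pcount k π (app π i) = 2 := by
  rw [pcount_eq_card]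
  have hset : (Finset.univ.filter fun h : Fin k => app π i = eU k π h.val)
      = {⟨i - 1, by omega⟩, ⟨i, hik⟩} := by
    ext h
    simp only [Finset.mem_filter, Finset.mem_insert, Finset.mem_singleton, Finset.mem_univ,
      true_and]
    constructor
    · intro hh
      rcases step_min_choice hh with he | he
      · have := app_inj hinj (by omega : h.val ≤ k) (by omega : i ≤ k) he
        right; exact Fin.ext this
      · have := app_inj hinj (by omega : h.val + 1 ≤ k) (by omega : i ≤ k) he
        left
        apply Fin.ext
        show h.val = i - 1
        omega
    · intro hh
      rcases hh with hh | hh <;> subst hh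
      · show app π i = app π (i-1) ⊓ app π (i-1+1)
        have hi11 : i - 1 + 1 = i := by omega
        rw [hi11]
        exact (min_eq_right hO).symm
      · show app π i = app π i ⊓ app π (i+1)
        exact (min_eq_left hY.le).symm
  rw [hset]
  have hne : (⟨i - 1, by omega⟩ : Fin k) ∉ ({⟨i, hik⟩} : Finset (Fin k)) := by
    simp only [Finset.mem_singleton]
    intro hc
    have := congrArg Fin.val hc
    simp only [] at this
    omega
  rw [Finset.card_insert_of_notMem hne, Finset.card_singleton]

lemma pcount_two_exists (hinj : Function.Injective π) {s : ℕ}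
    (hp : pcount k π s = 2) :
    ∃ i, 1 ≤ i ∧ i < k ∧ app π i ≤ app π (i-1) ∧ app π i < app π (i+1) ∧ app π i = s := by
  rw [pcount_eq_card] at hp
  obtain ⟨x, y, hxy, hFxy⟩ := Finset.card_eq_two.mp hp
  have hx : s = eU k π x.val := by
    have : x ∈ Finset.univ.filter fun h : Fin k => s = eU k π h.val := by
      rw [hFxy]; simp
    exact (Finset.mem_filter.mp this).2
  have hy : s = eU k π y.val := by
    have : y ∈ Finset.univ.filter fun h : Fin k => s = eU k π h.val := by
      rw [hFxy]; simp
    exact (Finset.mem_filter.mp this).2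
  -- the position of the value s
  have main : ∀ u v : Fin k, s = eU k π u.val → s = eU k π v.val →
      app π u.val = s → app π (v.val+1) = s →
      ∃ i, 1 ≤ i ∧ i < k ∧ app π i ≤ app π (i-1) ∧ app π i < app π (i+1) ∧ app π i = s := by
    intro u v hu hv hau hav
    have huv : v.val + 1 = u.val := app_inj hinj (by omega) (by omega) (hav.trans hau.symm)
    refine ⟨u.val, by omega, u.isLt, ?_, ?_, hau⟩
    · -- from v-step:  s = min (app π v) (app π (v+1)) and app π (v+1) = s
      have h2 : s = app π v.val ⊓ app π (v.val+1) := hv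
      have : u.val - 1 = v.val := by omega
      rw [this]
      omega
    · -- from u-step: s = min (app π u) (app π (u+1)), app π u = s
      have h2 : s = app π u.val ⊓ app π (u.val+1) := hu
      have hne : app π u.val ≠ app π (u.val+1) := fun hc => by
        have := app_inj hinj (by omega : u.val ≤ k) (by omega : u.val+1 ≤ k) hc
        omega
      omega
  rcases step_min_choice hx with hex | hex <;> rcases step_min_choice hy with hey | hey
  · exact absurd (Fin.ext (app_inj hinj (by omega) (by omega) (hex.trans hey.symm))) hxy
  · exact main x y hx hy hex hey
  · exact main y x hy hx hey hex
  · have : x.val + 1 = y.val + 1 := app_inj hinj (by omega) (by omega) (hex.trans hey.symm)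
    exact absurd (Fin.ext (by omega)) hxy

/-- the number of `s` with `p_s = 2` equals `N_OY`. -/
lemma card_pcount_two (hinj : Function.Injective π) (hb : 2 ≤ b) (hbn : b ≤ n)
    (hrange : ∀ i, i ≤ k → b ≤ app π i ∧ app π i ≤ n) :
    ((Finset.Icc 2 n).filter fun s => pcount k π s = 2).card = nOY k π := by
  rw [nOY]
  symm
  refine Finset.card_bij (fun i _ => app π i) ?_ ?_ ?_
  · intro i hi
    simp only [Finset.mem_filter, Finset.mem_Ico] at hi
    obtain ⟨⟨hi1, hik⟩, hO, hY⟩ := hi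
    simp only [Finset.mem_filter, Finset.mem_Icc]
    have hr := hrange i (by omega)
    exact ⟨⟨by omega, hr.2⟩, pcount_at_OY hinj hi1 hik hO hY⟩
  · intro i hi j hj hij
    simp only [Finset.mem_filter, Finset.mem_Ico] at hi hj
    exact app_inj hinj (by omega) (by omega) hij
  · intro s hs
    simp only [Finset.mem_filter, Finset.mem_Icc] at hs
    obtain ⟨i, hi1, hik, hO, hY, his⟩ := pcount_two_exists hinj hs.2
    refine ⟨i, ?_, his⟩
    simp only [Finset.mem_filter, Finset.mem_Ico]
    exact ⟨⟨hi1, hik⟩, hO, hY⟩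

lemma nOY_le (hinj : Function.Injective π) (hb : 2 ≤ b) (hbn : b ≤ n)
    (hrange : ∀ i, i ≤ k → b ≤ app π i ∧ app π i ≤ n) : nOY k π ≤ k := by
  rw [nOY]
  exact le_trans (Finset.card_filter_le _ _) (by simp)

end NOY
section Assembly

open Finset

set_option maxHeartbeats 1600000 in
/-- the central estimate: the log of the path weight is close to the log of `R`. -/
lemma key_estimate (m k n b : ℕ) (δ : ℝ) (hm : 2 ≤ m) (hδ : 0 < δ)
    (hn : 2 ≤ n) (hb : 2 ≤ b) (hbn : b ≤ n) (hk : 1 ≤ k)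
    (π : Fin (k+1) → ℕ) (hinj : Function.Injective π)
    (hrange : ∀ i, i ≤ k → b ≤ app π i ∧ app π i ≤ n) :
    0 < (∏ s ∈ Finset.Icc 2 n,
        ff (alphaC m δ + pcount k π s - 1) (pcount k π s) *
          ff (betaC m δ s + qcount k π s - 1) (qcount k π s) /
          ff (alphaC m δ + betaC m δ s + pcount k π s + qcount k π s - 1)
            (pcount k π s + qcount k π s)) ∧
    0 < Rval m δ k π ∧
    |Real.log (∏ s ∈ Finset.Icc 2 n,
        ff (alphaC m δ + pcount k π s - 1) (pcount k π s) *
          ff (betaC m δ s + qcount k π s - 1) (qcount k π s) /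
          ff (alphaC m δ + betaC m δ s + pcount k π s + qcount k π s - 1)
            (pcount k π s + qcount k π s)) - Real.log (Rval m δ k π)|
      ≤ 12*((m:ℝ)+δ+1) * k^2 / b := by
  -- abbreviations
  set α := alphaC m δ with hαdef
  set χv := chiC m δ with hχdef
  have hα : α = (m:ℝ) + δ := rfl
  have hχ : χv = ((m:ℝ)+δ)/(2*(m:ℝ)+δ) := rfl
  set γ : ℝ := 2*(m:ℝ) + δ with hγdef
  have hmR : (2:ℝ) ≤ (m:ℝ) := by exact_mod_cast hm
  have hγ0 : 0 < γ := by rw [hγdef]; linarith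
  have hα0 : 0 < α := by rw [hα]; linarith
  have hα10 : 0 < α + 1 := by linarith
  have hχ0 : 0 < χv := by rw [hχ]; positivity
  have hχ1 : χv ≤ 1 := by rw [hχ]; rw [div_le_one (by linarith)]; linarith
  have hkR : (1:ℝ) ≤ (k:ℝ) := by exact_mod_cast hk
  have hbR : (2:ℝ) ≤ (b:ℝ) := by exact_mod_cast hb
  have hb0 : (0:ℝ) < b := by linarith
  -- facts about β
  have hβs : ∀ s : ℕ, 2 ≤ s → betaC m δ s = γ*(s:ℝ) - 2*(m:ℝ) - α := by
    intro s hs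
    rw [betaC, hγdef, hα]; push_cast; ring
  have hβpos : ∀ s : ℕ, 2 ≤ s → ∀ j : ℕ, 0 < betaC m δ s + (j:ℝ) := by
    intro s hs j
    have hsR : (2:ℝ) ≤ (s:ℝ) := by exact_mod_cast hs
    have hj : (0:ℝ) ≤ (j:ℝ) := Nat.cast_nonneg j
    rw [hβs s hs, hγdef, hα]; nlinarith
  have hαβpos : ∀ s : ℕ, 2 ≤ s → ∀ j : ℕ, 0 < α + betaC m δ s + (j:ℝ) := by
    intro s hs j
    have := hβpos s hs j
    nlinarith
  -- edge-endpoint facts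
  have hUV : ∀ i ∈ Finset.range k, b ≤ eU k π i ∧ eU k π i ≤ n ∧ b ≤ eV k π i
      ∧ eV k π i ≤ n ∧ eU k π i < eV k π i := by
    intro i hi
    rw [Finset.mem_range] at hi
    obtain ⟨h1, h2, h3, h4⟩ := eUV_mem hrange hi
    exact ⟨h1, h2, h3, h4, eU_lt_eV hinj hi⟩
  set N := nOY k π with hNdef
  have hNk : N ≤ k := nOY_le hinj hb hbn hrange
  -- Step 1 : rewriting each factor of the product
  have hTrw : ∀ s ∈ Finset.Icc 2 n,
      ff (α + pcount k π s - 1) (pcount k π s) *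
        ff (betaC m δ s + qcount k π s - 1) (qcount k π s) /
        ff (α + betaC m δ s + pcount k π s + qcount k π s - 1)
          (pcount k π s + qcount k π s)
      = (∏ j ∈ Finset.range (pcount k π s), (α + j)) *
        (∏ j ∈ Finset.range (qcount k π s), (betaC m δ s + j)) /
        ((∏ j ∈ Finset.range (qcount k π s), (α + betaC m δ s + j)) *
         (∏ j ∈ Finset.range (pcount k π s), (α + betaC m δ s + qcount k π s + j))) := by
    intro s hs
    have h1 : ff (α + (pcount k π s : ℝ) - 1) (pcount k π s)
        = ∏ j ∈ Finset.range (pcount k π s), (α + (j:ℝ)) := ff_eq α _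
    have h2 : ff (betaC m δ s + (qcount k π s : ℝ) - 1) (qcount k π s)
        = ∏ j ∈ Finset.range (qcount k π s), (betaC m δ s + (j:ℝ)) := ff_eq _ _
    have hcast : α + betaC m δ s + (pcount k π s : ℝ) + (qcount k π s : ℝ) - 1
        = (α + betaC m δ s) + ((pcount k π s + qcount k π s : ℕ) : ℝ) - 1 := by
      push_cast; ring
    have h3 : ff (α + betaC m δ s + (pcount k π s : ℝ) + (qcount k π s : ℝ) - 1)
        (pcount k π s + qcount k π s)
        = ∏ j ∈ Finset.range (pcount k π s + qcount k π s), (α + betaC m δ s + (j:ℝ)) := by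
      rw [hcast, ff_eq (α + betaC m δ s) _]
    have h4 : ∏ j ∈ Finset.range (pcount k π s + qcount k π s), (α + betaC m δ s + (j:ℝ))
        = (∏ j ∈ Finset.range (qcount k π s), (α + betaC m δ s + (j:ℝ))) *
          ∏ j ∈ Finset.range (pcount k π s),
            (α + betaC m δ s + (qcount k π s : ℝ) + (j:ℝ)) := by
      rw [show pcount k π s + qcount k π s = qcount k π s + pcount k π s from
        add_comm _ _, Finset.prod_range_add]
      congr 1
      refine Finset.prod_congr rfl fun j _ => ?_
      push_cast; ring
    rw [h1, h2, h3, h4]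
  have hTpos : ∀ s ∈ Finset.Icc 2 n,
      0 < ff (α + pcount k π s - 1) (pcount k π s) *
        ff (betaC m δ s + qcount k π s - 1) (qcount k π s) /
        ff (α + betaC m δ s + pcount k π s + qcount k π s - 1)
          (pcount k π s + qcount k π s) := by
    intro s hs
    rw [hTrw s hs]
    rw [Finset.mem_Icc] at hs
    have h1 : ∀ j ∈ Finset.range (pcount k π s), 0 < α + (j:ℝ) := by
      intro j _; have : (0:ℝ) ≤ j := Nat.cast_nonneg j; linarith
    apply div_pos (mul_pos (Finset.prod_pos h1) (Finset.prod_pos ?_))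
      (mul_pos (Finset.prod_pos ?_) (Finset.prod_pos ?_))
    · intro j _; exact hβpos s hs.1 j
    · intro j _; exact hαβpos s hs.1 j
    · intro j _
      have h2 := hαβpos s hs.1 (qcount k π s + j)
      push_cast at h2 ⊢
      linarith
  have hPpos : 0 < ∏ s ∈ Finset.Icc 2 n,
      ff (α + pcount k π s - 1) (pcount k π s) *
        ff (betaC m δ s + qcount k π s - 1) (qcount k π s) /
        ff (α + betaC m δ s + pcount k π s + qcount k π s - 1)
          (pcount k π s + qcount k π s) := Finset.prod_pos hTpos
  -- Step 2 : the log of the product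
  have hlogP : Real.log (∏ s ∈ Finset.Icc 2 n,
      ff (α + pcount k π s - 1) (pcount k π s) *
        ff (betaC m δ s + qcount k π s - 1) (qcount k π s) /
        ff (α + betaC m δ s + pcount k π s + qcount k π s - 1)
          (pcount k π s + qcount k π s))
      = (∑ s ∈ Finset.Icc 2 n, ∑ j ∈ Finset.range (pcount k π s), Real.log (α + j))
        + (∑ s ∈ Finset.Icc 2 n, ∑ j ∈ Finset.range (qcount k π s),
            (Real.log (betaC m δ s + j) - Real.log (α + betaC m δ s + j)))
        - (∑ s ∈ Finset.Icc 2 n, ∑ j ∈ Finset.range (pcount k π s),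
            Real.log (α + betaC m δ s + qcount k π s + j)) := by
    rw [Real.log_prod (fun s hs => ne_of_gt (hTpos s hs))]
    rw [← Finset.sum_add_distrib, ← Finset.sum_sub_distrib]
    refine Finset.sum_congr rfl fun s hs => ?_
    rw [hTrw s hs]
    rw [Finset.mem_Icc] at hs
    have hp1 : ∀ j ∈ Finset.range (pcount k π s), α + (j:ℝ) ≠ 0 := by
      intro j _
      have : (0:ℝ) ≤ j := Nat.cast_nonneg j
      positivity
    have hq1 : ∀ j ∈ Finset.range (qcount k π s), betaC m δ s + (j:ℝ) ≠ 0 :=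
      fun j _ => ne_of_gt (hβpos s hs.1 j)
    have hq2 : ∀ j ∈ Finset.range (qcount k π s), α + betaC m δ s + (j:ℝ) ≠ 0 :=
      fun j _ => ne_of_gt (hαβpos s hs.1 j)
    have hp2 : ∀ j ∈ Finset.range (pcount k π s),
        α + betaC m δ s + (qcount k π s : ℝ) + (j:ℝ) ≠ 0 := by
      intro j _
      have h2 := hαβpos s hs.1 (qcount k π s + j)
      push_cast at h2
      exact ne_of_gt (by linarith)
    have hnum1 := Finset.prod_ne_zero_iff.mpr hp1
    have hnum2 := Finset.prod_ne_zero_iff.mpr hq1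
    have hden1 := Finset.prod_ne_zero_iff.mpr hq2
    have hden2 := Finset.prod_ne_zero_iff.mpr hp2
    rw [Real.log_div (mul_ne_zero hnum1 hnum2) (mul_ne_zero hden1 hden2),
      Real.log_mul hnum1 hnum2, Real.log_mul hden1 hden2,
      Real.log_prod hp1, Real.log_prod hq1, Real.log_prod hq2,
      Real.log_prod hp2, Finset.sum_sub_distrib]
    ring
  -- Step 3 : the p-numerator sum
  have hA1 : (∑ s ∈ Finset.Icc 2 n, ∑ j ∈ Finset.range (pcount k π s), Real.log (α + j))
      = ((k - N : ℕ) : ℝ) * Real.log α + (N:ℝ) * Real.log (α+1) := by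
    have hper : ∀ s ∈ Finset.Icc 2 n,
        ∑ j ∈ Finset.range (pcount k π s), Real.log (α + j)
        = (pcount k π s : ℝ) * Real.log α
          + (if pcount k π s = 2 then Real.log (α+1) - Real.log α else 0) := by
      intro s _
      have h2 := pcount_le_two hinj (k := k) (π := π) s
      have hc : pcount k π s = 0 ∨ pcount k π s = 1 ∨ pcount k π s = 2 := by omega
      rcases hc with h | h | h <;> rw [h]
      · simp
      · simp
      · rw [Finset.sum_range_succ, Finset.sum_range_one]
        norm_num
        ring
    rw [Finset.sum_congr rfl hper, Finset.sum_add_distrib]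
    have e1 : ∑ s ∈ Finset.Icc 2 n, (pcount k π s : ℝ) * Real.log α
        = (k:ℝ) * Real.log α := by
      rw [sum_pcount_mul hb hrange (fun _ => Real.log α), Finset.sum_const,
        Finset.card_range, nsmul_eq_mul]
    have e2 : ∑ s ∈ Finset.Icc 2 n,
        (if pcount k π s = 2 then Real.log (α+1) - Real.log α else 0)
        = (N:ℝ) * (Real.log (α+1) - Real.log α) := by
      rw [← Finset.sum_filter, Finset.sum_const,
        card_pcount_two hinj hb hbn hrange, ← hNdef, nsmul_eq_mul]
    rw [e1, e2, Nat.cast_sub hNk]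
    ring
  -- Step 4 : the p-denominator sum
  have hA3 : ∃ E3 : ℝ, (∑ s ∈ Finset.Icc 2 n, ∑ j ∈ Finset.range (pcount k π s),
        Real.log (α + betaC m δ s + qcount k π s + j))
      = (k:ℝ) * Real.log γ + (∑ i ∈ Finset.range k, Real.log (eU k π i)) + E3
      ∧ |E3| ≤ 3*(k:ℝ)^2/b := by
    set g : ℕ → ℝ := fun s => Real.log (γ * s) with hg
    refine ⟨(∑ s ∈ Finset.Icc 2 n, ∑ j ∈ Finset.range (pcount k π s),
        Real.log (α + betaC m δ s + qcount k π s + j))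
      - ∑ s ∈ Finset.Icc 2 n, (pcount k π s : ℝ) * g s, ?_, ?_⟩
    · have hM3 : ∑ s ∈ Finset.Icc 2 n, (pcount k π s : ℝ) * g s
          = (k:ℝ) * Real.log γ + ∑ i ∈ Finset.range k, Real.log (eU k π i) := by
        rw [sum_pcount_mul hb hrange g]
        have : ∀ i ∈ Finset.range k, g (eU k π i)
            = Real.log γ + Real.log (eU k π i) := by
          intro i hi
          have hU := (hUV i hi).1
          have hU0 : (0:ℝ) < (eU k π i : ℕ) := by
            have : (2:ℕ) ≤ eU k π i := le_trans hb hU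
            exact_mod_cast Nat.lt_of_lt_of_le Nat.zero_lt_two this
          rw [hg]
          exact Real.log_mul (ne_of_gt hγ0) (ne_of_gt hU0)
        rw [Finset.sum_congr rfl this, Finset.sum_add_distrib, Finset.sum_const,
          Finset.card_range, nsmul_eq_mul]
      rw [hM3]; ring
    · have hper : ∀ s ∈ Finset.Icc 2 n,
          |(∑ j ∈ Finset.range (pcount k π s),
            Real.log (α + betaC m δ s + qcount k π s + j)) - (pcount k π s : ℝ) * g s|
          ≤ (pcount k π s : ℝ) * (3*(k:ℝ)/b) := by
        intro s hs
        rw [Finset.mem_Icc] at hs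
        rcases Nat.eq_zero_or_pos (pcount k π s) with h0 | h0
        · simp [h0]
        have hsb := (pcount_pos_range hb hrange h0).1
        have hsbR : (b:ℝ) ≤ (s:ℝ) := by exact_mod_cast hsb
        have hsR : (2:ℝ) ≤ (s:ℝ) := by exact_mod_cast hs.1
        have step : (pcount k π s : ℝ) * g s
            = ∑ _j ∈ Finset.range (pcount k π s), g s := by
          rw [Finset.sum_const, Finset.card_range, nsmul_eq_mul]
        rw [step, ← Finset.sum_sub_distrib]
        refine le_trans (Finset.abs_sum_le_sum_abs _ _) ?_
        have hbd : ∀ j ∈ Finset.range (pcount k π s),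
            |Real.log (α + betaC m δ s + qcount k π s + j) - g s| ≤ 3*(k:ℝ)/b := by
          intro j hj
          rw [Finset.mem_range] at hj
          have hjp : j ≤ 1 := by
            have := pcount_le_two hinj (k := k) (π := π) s
            omega
          have hq := qcount_le hinj (k := k) (π := π) s
          have harg : α + betaC m δ s + (qcount k π s : ℝ) + (j:ℝ)
              = (2*(m:ℝ)+δ)*(s:ℝ) - 2*(m:ℝ) + ((qcount k π s : ℝ) + (j:ℝ)) := by
            rw [hβs s hs.1, hγdef]; ring
          have hw0 : (0:ℝ) ≤ (qcount k π s : ℝ) + (j:ℝ) := by positivity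
          have hw3 : (qcount k π s : ℝ) + (j:ℝ) ≤ 3*(k:ℝ) := by
            have h1 : (qcount k π s : ℝ) ≤ (k:ℝ) := by exact_mod_cast hq
            have h2 : (j:ℝ) ≤ 1 := by exact_mod_cast hjp
            linarith
          have hplog := plog_bound (m:ℝ) δ (s:ℝ) ((qcount k π s : ℝ) + (j:ℝ)) (k:ℝ)
            hmR hδ hsR hw0 hw3 hkR
          rw [← hγdef] at hplog
          rw [harg, hg]
          refine le_trans hplog ?_
          apply div_le_div_of_nonneg_left (by positivity) (by linarith) hsbR
        refine le_trans (Finset.sum_le_sum hbd) ?_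
        rw [Finset.sum_const, Finset.card_range, nsmul_eq_mul]
      refine le_trans (le_trans ?_ (Finset.sum_le_sum hper)) ?_
      · rw [← Finset.sum_sub_distrib]
        exact Finset.abs_sum_le_sum_abs _ _
      · have : ∑ s ∈ Finset.Icc 2 n, (pcount k π s : ℝ) * (3*(k:ℝ)/b)
            = (k:ℝ) * (3*(k:ℝ)/b) := by
          rw [sum_pcount_mul hb hrange (fun _ => 3*(k:ℝ)/b), Finset.sum_const,
            Finset.card_range, nsmul_eq_mul]
        rw [this]
        exact le_of_eq (by ring)
  -- Step 5 : the q-part sum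
  have hA2 : ∃ E2 : ℝ, (∑ s ∈ Finset.Icc 2 n, ∑ j ∈ Finset.range (qcount k π s),
        (Real.log (betaC m δ s + j) - Real.log (α + betaC m δ s + j)))
      = (∑ i ∈ Finset.range k,
          χv * (Real.log (eU k π i) - Real.log ((eV k π i : ℝ) - 1))) + E2
      ∧ |E2| ≤ 8*((m:ℝ)+δ+1)*(k:ℝ)^2/b := by
    set t : ℕ → ℝ := fun s => χv * (Real.log ((s:ℝ)-1) - Real.log (s:ℝ)) with ht
    refine ⟨(∑ s ∈ Finset.Icc 2 n, ∑ j ∈ Finset.range (qcount k π s),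
        (Real.log (betaC m δ s + j) - Real.log (α + betaC m δ s + j)))
      - ∑ s ∈ Finset.Icc 2 n, (qcount k π s : ℝ) * t s, ?_, ?_⟩
    · have hM2 : ∑ s ∈ Finset.Icc 2 n, (qcount k π s:ℝ) * t s
          = ∑ i ∈ Finset.range k,
            χv * (Real.log (eU k π i) - Real.log ((eV k π i : ℝ) - 1)) := by
        rw [sum_qcount_mul hb hrange t]
        refine Finset.sum_congr rfl fun i hi => ?_
        obtain ⟨h1, h2, h3, h4, h5⟩ := hUV i hi
        have : ∑ s ∈ Finset.Ioo (eU k π i) (eV k π i), t s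
            = χv * ∑ s ∈ Finset.Ioo (eU k π i) (eV k π i),
                (Real.log ((s:ℝ)-1) - Real.log (s:ℝ)) := by
          rw [Finset.mul_sum]
        rw [this, telescope_log (eU k π i) (eV k π i) (by omega) h5]
      rw [hM2]; ring
    · set C8 : ℝ := 8*((m:ℝ)+δ+1) with hC8
      have hC80 : (0:ℝ) < C8 := by rw [hC8]; linarith
      set w : ℕ → ℝ := fun s => if 0 < qcount k π s then (1/((s:ℝ)-1) - 1/(s:ℝ)) else 0
        with hw
      have hper : ∀ s ∈ Finset.Icc 2 n,
          |(∑ j ∈ Finset.range (qcount k π s),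
            (Real.log (betaC m δ s + j) - Real.log (α + betaC m δ s + j)))
            - (qcount k π s : ℝ) * t s| ≤ C8*(k:ℝ)^2 * w s := by
        intro s hs
        rw [Finset.mem_Icc] at hs
        rcases Nat.eq_zero_or_pos (qcount k π s) with h0 | h0
        · rw [hw]
          simp [h0]
        obtain ⟨hb1, hn1⟩ := qcount_pos_range hb hrange h0
        have hs3n : (3:ℕ) ≤ s := by omega
        have hs3 : (3:ℝ) ≤ (s:ℝ) := by exact_mod_cast hs3n
        have hstep : (qcount k π s : ℝ) * t s
            = ∑ _j ∈ Finset.range (qcount k π s), t s := by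
          rw [Finset.sum_const, Finset.card_range, nsmul_eq_mul]
        rw [hstep, ← Finset.sum_sub_distrib]
        refine le_trans (Finset.abs_sum_le_sum_abs _ _) ?_
        have hbd : ∀ j ∈ Finset.range (qcount k π s),
            |Real.log (betaC m δ s + j) - Real.log (α + betaC m δ s + j) - t s|
              ≤ C8*(k:ℝ)/(s:ℝ)^2 := by
          intro j hj
          rw [Finset.mem_range] at hj
          have harg1 : betaC m δ s + (j:ℝ)
              = (2*(m:ℝ)+δ)*(s:ℝ) - 2*(m:ℝ) + (j:ℝ) - ((m:ℝ)+δ) := by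
            rw [hβs s hs.1, hγdef, hα]; ring
          have harg2 : α + betaC m δ s + (j:ℝ)
              = (2*(m:ℝ)+δ)*(s:ℝ) - 2*(m:ℝ) + (j:ℝ) := by
            rw [hβs s hs.1, hγdef]; ring
          have hqlog := qlog_bound (m:ℝ) δ (s:ℝ) (j:ℝ) hmR hδ hs3 (Nat.cast_nonneg j)
          have htrw : t s = ((m:ℝ)+δ)/(2*(m:ℝ)+δ) * (Real.log ((s:ℝ)-1) - Real.log (s:ℝ)) := by
            rw [ht]
            simp only []
            rw [hχ, hγdef]
          rw [harg1, harg2, htrw]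
          refine le_trans hqlog ?_
          rw [← hC8]
          have hjk : 1 + (j:ℝ) ≤ (k:ℝ) := by
            have h1 : j + 1 ≤ k := le_trans hj (qcount_le hinj (k := k) (π := π) s)
            exact_mod_cast by omega
          exact (div_le_div_iff_of_pos_right (by positivity)).mpr
            (mul_le_mul_of_nonneg_left hjk hC80.le)
        refine le_trans (Finset.sum_le_sum hbd) ?_
        rw [Finset.sum_const, Finset.card_range, nsmul_eq_mul]
        have hqk : (qcount k π s : ℝ) ≤ (k:ℝ) := by
          exact_mod_cast qcount_le hinj (k := k) (π := π) s
        have hws : w s = 1/((s:ℝ)-1) - 1/(s:ℝ) := by rw [hw]; simp [h0]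
        have hinv : 1/(s:ℝ)^2 ≤ 1/((s:ℝ)-1) - 1/(s:ℝ) := by
          have h1 : ((s:ℝ)-1) ≠ 0 := by linarith
          have h2 : (s:ℝ) ≠ 0 := by linarith
          have key : 1/((s:ℝ)-1) - 1/(s:ℝ) = 1/(((s:ℝ)-1)*(s:ℝ)) := by
            field_simp
            ring
          rw [key]
          exact div_le_div₀ zero_le_one le_rfl (by nlinarith) (by nlinarith)
        rw [hws]
        have e1 : (qcount k π s : ℝ) * (C8*(k:ℝ)/(s:ℝ)^2) ≤ (k:ℝ) * (C8*(k:ℝ)/(s:ℝ)^2) := by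
          apply mul_le_mul_of_nonneg_right hqk (by positivity)
        refine le_trans e1 ?_
        have e2 : (k:ℝ) * (C8*(k:ℝ)/(s:ℝ)^2) = C8*(k:ℝ)^2 * (1/(s:ℝ)^2) := by ring
        rw [e2]
        apply mul_le_mul_of_nonneg_left hinv (by positivity)
      have hwsum : ∑ s ∈ Finset.Icc 2 n, w s ≤ 1/(b:ℝ) := by
        rw [hw, ← Finset.sum_filter]
        refine le_trans (Finset.sum_le_sum_of_subset_of_nonneg ?_ ?_)
          (telescope_inv b n (by omega))
        · intro s hs
          rw [Finset.mem_filter, Finset.mem_Icc] at hs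
          obtain ⟨hq1, hq2⟩ := qcount_pos_range hb hrange hs.2
          rw [Finset.mem_Icc]
          omega
        · intro s hs _
          rw [Finset.mem_Icc] at hs
          have hs3 : (3:ℝ) ≤ (s:ℝ) := by exact_mod_cast (by omega : 3 ≤ s)
          have : 1/(s:ℝ) ≤ 1/((s:ℝ)-1) := by
            apply one_div_le_one_div_of_le (by linarith) (by linarith)
          linarith
      have hsplit : (∑ s ∈ Finset.Icc 2 n, ∑ j ∈ Finset.range (qcount k π s),
          (Real.log (betaC m δ s + j) - Real.log (α + betaC m δ s + j)))
          - ∑ s ∈ Finset.Icc 2 n, (qcount k π s : ℝ) * t s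
          = ∑ s ∈ Finset.Icc 2 n, ((∑ j ∈ Finset.range (qcount k π s),
            (Real.log (betaC m δ s + j) - Real.log (α + betaC m δ s + j)))
            - (qcount k π s : ℝ) * t s) := (Finset.sum_sub_distrib _ _).symm
      rw [hsplit]
      refine le_trans (Finset.abs_sum_le_sum_abs _ _)
        (le_trans (Finset.sum_le_sum hper) ?_)
      have hms : ∑ s ∈ Finset.Icc 2 n, C8*(k:ℝ)^2 * w s
          = C8*(k:ℝ)^2 * ∑ s ∈ Finset.Icc 2 n, w s := (Finset.mul_sum _ _ _).symm
      rw [hms]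
      refine le_trans (mul_le_mul_of_nonneg_left hwsum (by positivity))
        (le_of_eq (by ring))
  -- Step 6 : the log of Rval
  have hminmax : ∀ i ∈ Finset.Icc 1 k,
      (0:ℝ) < ((min (app π (i-1)) (app π i) : ℕ):ℝ)
      ∧ (0:ℝ) < ((max (app π (i-1)) (app π i) : ℕ):ℝ) := by
    intro i hi
    rw [Finset.mem_Icc] at hi
    have r1 := hrange (i-1) (by omega)
    have r2 := hrange i (by omega)
    constructor
    · have : 0 < min (app π (i-1)) (app π i) := by omega
      exact_mod_cast this
    · have : 0 < max (app π (i-1)) (app π i) := by omega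
      exact_mod_cast this
  have hfacpos : ∀ i ∈ Finset.Icc 1 k,
      (0:ℝ) < ((min (app π (i-1)) (app π i) : ℕ):ℝ) ^ (1 - chiC m δ)
        * ((max (app π (i-1)) (app π i) : ℕ):ℝ) ^ chiC m δ := by
    intro i hi
    obtain ⟨h1, h2⟩ := hminmax i hi
    exact mul_pos (Real.rpow_pos_of_pos h1 _) (Real.rpow_pos_of_pos h2 _)
  have hχχ : (0:ℝ) < ((m:ℝ)+δ)/(2*(m:ℝ)+δ) := by
    apply div_pos <;> linarith
  have hχχ1 : (0:ℝ) < ((m:ℝ)+1+δ)/(2*(m:ℝ)+δ) := by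
    apply div_pos <;> linarith
  have hRpos : 0 < Rval m δ k π := by
    rw [Rval]
    exact mul_pos (mul_pos (pow_pos hχχ _) (pow_pos hχχ1 _))
      (Finset.prod_pos fun i hi => inv_pos.mpr (hfacpos i hi))
  have hlogR : Real.log (Rval m δ k π)
      = ((k - N : ℕ):ℝ) * (Real.log α - Real.log γ)
        + (N:ℝ) * (Real.log (α+1) - Real.log γ)
        - ∑ i ∈ Finset.range k,
            ((1-χv) * Real.log (eU k π i) + χv * Real.log (eV k π i)) := by
    rw [Rval]
    rw [Real.log_mul (mul_ne_zero (ne_of_gt (pow_pos hχχ _)) (ne_of_gt (pow_pos hχχ1 _)))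
        (ne_of_gt (Finset.prod_pos fun i hi => inv_pos.mpr (hfacpos i hi))),
      Real.log_mul (ne_of_gt (pow_pos hχχ _)) (ne_of_gt (pow_pos hχχ1 _)),
      Real.log_pow, Real.log_pow,
      Real.log_prod (fun i hi => ne_of_gt (inv_pos.mpr (hfacpos i hi)))]
    have l1 : Real.log (((m:ℝ)+δ)/(2*(m:ℝ)+δ)) = Real.log α - Real.log γ := by
      rw [Real.log_div (by linarith) (by linarith), hα, hγdef]
    have l2 : Real.log (((m:ℝ)+1+δ)/(2*(m:ℝ)+δ)) = Real.log (α+1) - Real.log γ := by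
      rw [Real.log_div (by linarith) (by linarith), hα, hγdef]
      have : ((m:ℝ)+1+δ) = ((m:ℝ)+δ)+1 := by ring
      rw [this]
    have l3 : ∑ i ∈ Finset.Icc 1 k,
        Real.log ((((min (app π (i-1)) (app π i) : ℕ):ℝ) ^ (1 - chiC m δ)
          * ((max (app π (i-1)) (app π i) : ℕ):ℝ) ^ chiC m δ)⁻¹)
        = - ∑ i ∈ Finset.range k,
            ((1-χv) * Real.log (eU k π i) + χv * Real.log (eV k π i)) := by
      have per : ∀ i ∈ Finset.Icc 1 k,
          Real.log ((((min (app π (i-1)) (app π i) : ℕ):ℝ) ^ (1 - chiC m δ)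
            * ((max (app π (i-1)) (app π i) : ℕ):ℝ) ^ chiC m δ)⁻¹)
          = -((1-χv) * Real.log ((min (app π (i-1)) (app π i) : ℕ):ℝ)
              + χv * Real.log ((max (app π (i-1)) (app π i) : ℕ):ℝ)) := by
        intro i hi
        obtain ⟨h1, h2⟩ := hminmax i hi
        rw [Real.log_inv, Real.log_mul (ne_of_gt (Real.rpow_pos_of_pos h1 _))
          (ne_of_gt (Real.rpow_pos_of_pos h2 _)), Real.log_rpow h1, Real.log_rpow h2,
          hχdef]
      rw [Finset.sum_congr rfl per, ← Finset.Ico_add_one_right_eq_Icc, Finset.sum_Ico_eq_sum_range]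
      have hkk : k + 1 - 1 = k := by omega
      rw [hkk, ← Finset.sum_neg_distrib]
      refine Finset.sum_congr rfl fun i hi => ?_
      have e1 : 1 + i - 1 = i := by omega
      have e2 : 1 + i = i + 1 := by omega
      rw [e1, e2]
      rfl
    rw [l1, l2, l3]
    ring
  -- Step 7 : assembling everything
  obtain ⟨E2, hA2e, hE2⟩ := hA2
  obtain ⟨E3, hA3e, hE3⟩ := hA3
  refine ⟨hPpos, hRpos, ?_⟩
  have hcorr : ∀ i ∈ Finset.range k,
      |χv * (Real.log (eV k π i) - Real.log ((eV k π i:ℝ) - 1))| ≤ 1/(b:ℝ) := by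
    intro i hi
    obtain ⟨h1, h2, h3, h4, h5⟩ := hUV i hi
    have hVb : (b:ℝ) ≤ (eV k π i:ℝ) - 1 := by
      have : b + 1 ≤ eV k π i := by omega
      have := (Nat.cast_le (α := ℝ)).mpr this
      push_cast at this
      linarith
    have hV1 : (0:ℝ) < (eV k π i:ℝ) - 1 := by linarith
    have hss := log_sub_log_bounds hV1 (by linarith : (eV k π i:ℝ) - 1 ≤ (eV k π i:ℝ))
    have hd0 : 0 ≤ Real.log (eV k π i) - Real.log ((eV k π i:ℝ) - 1) := by
      have := Real.log_le_log hV1 (by linarith : (eV k π i:ℝ) - 1 ≤ (eV k π i:ℝ))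
      linarith
    have hdup : Real.log (eV k π i) - Real.log ((eV k π i:ℝ) - 1) ≤ 1/((eV k π i:ℝ)-1) := by
      have h := hss.1
      have : ((eV k π i:ℝ) - 1 - (eV k π i:ℝ))/((eV k π i:ℝ)-1) = -(1/((eV k π i:ℝ)-1)) := by
        ring
      rw [this] at h
      linarith
    rw [abs_of_nonneg (mul_nonneg hχ0.le hd0)]
    have := mul_le_of_le_one_left hd0 hχ1
    refine le_trans this (le_trans hdup ?_)
    exact one_div_le_one_div_of_le hb0 hVb
  have heq : Real.log (∏ s ∈ Finset.Icc 2 n,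
      ff (α + pcount k π s - 1) (pcount k π s) *
        ff (betaC m δ s + qcount k π s - 1) (qcount k π s) /
        ff (α + betaC m δ s + pcount k π s + qcount k π s - 1)
          (pcount k π s + qcount k π s)) - Real.log (Rval m δ k π)
      = (∑ i ∈ Finset.range k, χv * (Real.log (eV k π i) - Real.log ((eV k π i:ℝ) - 1)))
        + E2 - E3 := by
    rw [hlogP, hA1, hA2e, hA3e, hlogR]
    have hsum : (∑ i ∈ Finset.range k,
        χv * (Real.log (eU k π i) - Real.log ((eV k π i:ℝ) - 1)))
        - (∑ i ∈ Finset.range k, Real.log (eU k π i))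
        + ∑ i ∈ Finset.range k,
            ((1-χv) * Real.log (eU k π i) + χv * Real.log (eV k π i))
        = ∑ i ∈ Finset.range k,
            χv * (Real.log (eV k π i) - Real.log ((eV k π i:ℝ) - 1)) := by
      rw [← Finset.sum_sub_distrib, ← Finset.sum_add_distrib]
      refine Finset.sum_congr rfl fun i _ => by ring
    rw [Nat.cast_sub hNk]
    linarith [hsum]
  rw [heq]
  have habs : |(∑ i ∈ Finset.range k,
      χv * (Real.log (eV k π i) - Real.log ((eV k π i:ℝ) - 1))) + E2 - E3|
      ≤ (k:ℝ) * (1/(b:ℝ)) + 8*((m:ℝ)+δ+1)*(k:ℝ)^2/b + 3*(k:ℝ)^2/b := by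
    have h1 : |∑ i ∈ Finset.range k,
        χv * (Real.log (eV k π i) - Real.log ((eV k π i:ℝ) - 1))| ≤ (k:ℝ) * (1/(b:ℝ)) := by
      refine le_trans (Finset.abs_sum_le_sum_abs _ _)
        (le_trans (Finset.sum_le_sum hcorr) ?_)
      rw [Finset.sum_const, Finset.card_range, nsmul_eq_mul]
    calc |(∑ i ∈ Finset.range k,
        χv * (Real.log (eV k π i) - Real.log ((eV k π i:ℝ) - 1))) + E2 - E3|
        ≤ |(∑ i ∈ Finset.range k,
            χv * (Real.log (eV k π i) - Real.log ((eV k π i:ℝ) - 1))) + E2| + |E3| := by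
          exact abs_sub _ _
      _ ≤ |∑ i ∈ Finset.range k,
            χv * (Real.log (eV k π i) - Real.log ((eV k π i:ℝ) - 1))| + |E2| + |E3| := by
          have := abs_add_le (∑ i ∈ Finset.range k,
            χv * (Real.log (eV k π i) - Real.log ((eV k π i:ℝ) - 1))) E2
          linarith
      _ ≤ (k:ℝ) * (1/(b:ℝ)) + 8*((m:ℝ)+δ+1)*(k:ℝ)^2/b + 3*(k:ℝ)^2/b := by
          linarith
  refine le_trans habs ?_
  have hkk2 : (k:ℝ) ≤ (k:ℝ)^2 := by nlinarith
  have hfin : (k:ℝ) * (1/(b:ℝ)) + 8*((m:ℝ)+δ+1)*(k:ℝ)^2/b + 3*(k:ℝ)^2/b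
      = ((k:ℝ) + 8*((m:ℝ)+δ+1)*(k:ℝ)^2 + 3*(k:ℝ)^2)/b := by ring
  rw [hfin]
  apply (div_le_div_iff_of_pos_right hb0).mpr
  nlinarith [sq_nonneg ((k:ℝ))]

end Assembly
section Final

lemma nuConst_ge_four (m : ℕ) (hm : 2 ≤ m) {δ : ℝ} (hδ : 0 < δ) :
    (4:ℝ) ≤ nuConst m δ := by
  rw [nuConst]
  have hmR : (2:ℝ) ≤ (m:ℝ) := by exact_mod_cast hm
  have h1 : (0:ℝ) ≤ Real.sqrt ((m:ℝ) * ((m:ℝ) - 1) * ((m:ℝ) + δ) * ((m:ℝ) + 1 + δ)) :=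
    Real.sqrt_nonneg _
  have h2 : 2*δ ≤ (m:ℝ)*((m:ℝ)+δ) := by nlinarith
  have h3 : (2:ℝ) ≤ ((m:ℝ) * ((m:ℝ) + δ) +
      Real.sqrt ((m:ℝ) * ((m:ℝ) - 1) * ((m:ℝ) + δ) * ((m:ℝ) + 1 + δ))) / δ := by
    rw [le_div_iff₀ hδ]
    nlinarith
  linarith

/-- two-sided bound for the falling-factorial path weight of an edge-labeled
self-avoiding path all of whose vertices are at least `b`. -/
theorem path_weight_two_sided_bound
    (m : ℕ) (hm : 2 ≤ m) (δ : ℝ) (hδ : 0 < δ) :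
    ∃ c C : ℝ, 0 < c ∧ c < 1 ∧ 1 < C ∧
      ∀ n b k : ℕ, ∀ (π : Fin (k + 1) → ℕ) (lab : Fin k → ℕ),
        2 ≤ n → 2 ≤ b → b ≤ n → 1 ≤ k → (k : ℝ) ≤ 4 * Real.logb (nuConst m δ) n →
        IsLabeledPath m k π lab → Function.Injective π →
        (∀ i, i ≤ k → b ≤ app π i ∧ app π i ≤ n) →
        c ^ (Real.log n ^ 2 / b) * Rval m δ k π ≤
          (∏ s ∈ Finset.Icc 2 n,
            ff (alphaC m δ + pcount k π s - 1) (pcount k π s) *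
              ff (betaC m δ s + qcount k π s - 1) (qcount k π s) /
              ff (alphaC m δ + betaC m δ s + pcount k π s + qcount k π s - 1)
                (pcount k π s + qcount k π s)) ∧
          (∏ s ∈ Finset.Icc 2 n,
            ff (alphaC m δ + pcount k π s - 1) (pcount k π s) *
              ff (betaC m δ s + qcount k π s - 1) (qcount k π s) /
              ff (alphaC m δ + betaC m δ s + pcount k π s + qcount k π s - 1)
                (pcount k π s + qcount k π s)) ≤
            C ^ (Real.log n ^ 2 / b) * Rval m δ k π := by
  have hmR : (2:ℝ) ≤ (m:ℝ) := by exact_mod_cast hm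
  set K : ℝ := 192*((m:ℝ)+δ+1) with hK
  have hK0 : 0 < K := by rw [hK]; linarith
  refine ⟨Real.exp (-K), Real.exp K, Real.exp_pos _, ?_, ?_, ?_⟩
  · have := Real.exp_lt_exp.mpr (show -K < 0 by linarith)
    rwa [Real.exp_zero] at this
  · have := Real.exp_lt_exp.mpr (show (0:ℝ) < K by linarith)
    rwa [Real.exp_zero] at this
  intro n b k π lab hn hb hbn hk hklog _hpath hinj hrange
  obtain ⟨hP, hR, hest⟩ := key_estimate m k n b δ hm hδ hn hb hbn hk π hinj hrange
  have hb0 : (0:ℝ) < (b:ℝ) := by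
    have : (2:ℝ) ≤ (b:ℝ) := by exact_mod_cast hb
    linarith
  -- `k ≤ 4 log n`
  have hν4 := nuConst_ge_four m hm hδ
  have hν0 : (0:ℝ) < nuConst m δ := by linarith
  have hlogν : 1 ≤ Real.log (nuConst m δ) := by
    rw [Real.le_log_iff_exp_le hν0]
    have h1 := Real.exp_one_lt_d9
    linarith
  have hlogn : (0:ℝ) < Real.log n := by
    apply Real.log_pos
    exact_mod_cast Nat.lt_of_lt_of_le Nat.one_lt_two hn
  have hk4 : (k:ℝ) ≤ 4 * Real.log n := by
    have h1 : Real.logb (nuConst m δ) n = Real.log n / Real.log (nuConst m δ) := rfl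
    have h2 : Real.log n / Real.log (nuConst m δ) ≤ Real.log n :=
      div_le_self hlogn.le hlogν
    rw [h1] at hklog
    linarith
  have hk2 : (k:ℝ)^2 ≤ 16 * Real.log n^2 := by
    have hk0 : (0:ℝ) ≤ (k:ℝ) := Nat.cast_nonneg k
    nlinarith
  -- the main bound
  have hbound : 12*((m:ℝ)+δ+1)*(k:ℝ)^2/b ≤ K * (Real.log n^2 / b) := by
    have he : K * (Real.log n^2/b) = (192*((m:ℝ)+δ+1) * Real.log n^2)/b := by
      rw [hK]; ring
    rw [he]
    apply (div_le_div_iff_of_pos_right hb0).mpr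
    nlinarith
  have hest2 := le_trans hest hbound
  have habs := abs_le.mp hest2
  have hE0 : (0:ℝ) ≤ Real.log n^2 / b := by positivity
  constructor
  · have hc : (Real.exp (-K)) ^ (Real.log n^2/(b:ℝ)) = Real.exp (-(K * (Real.log n^2/b))) := by
      rw [← Real.exp_mul]; ring_nf
    rw [hc]
    have he2 : Real.exp (-(K * (Real.log n^2/b))) * Rval m δ k π
        = Real.exp (-(K * (Real.log n^2/b)) + Real.log (Rval m δ k π)) := by
      rw [Real.exp_add, Real.exp_log hR]
    rw [he2, ← Real.exp_log hP]
    apply Real.exp_le_exp.mpr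
    linarith [habs.1]
  · have hc : (Real.exp K) ^ (Real.log n^2/(b:ℝ)) = Real.exp (K * (Real.log n^2/b)) := by
      rw [← Real.exp_mul]
    rw [hc]
    have he2 : Real.exp (K * (Real.log n^2/b)) * Rval m δ k π
        = Real.exp (K * (Real.log n^2/b) + Real.log (Rval m δ k π)) := by
      rw [Real.exp_add, Real.exp_log hR]
    rw [he2]
    nth_rewrite 1 [← Real.exp_log hP]
    apply Real.exp_le_exp.mpr
    linarith [habs.2]


end Final

end PAPaper
end
end

section
/- Fix an integer m ≥ 2 and a real δ > 0. There exist constants 0 < c < 1 < C depending only on m and δ such that for all integers n ≥ 2, 2 ≤ b ≤ n and every good edge set E with respect to (n,b): c^{(log n)²/b} ≤ ( ∏_{s=2}^n (β_s+q_s^E−1)_{q_s^E} / (α+β_s+p_s^E+q_s^E−1)_{p_s^E+q_s^E} ) · (2m+δ)^{|E|} · ∏_{(ℓ,i,j)∈E} j^{1−χ} ℓ^{χ} ≤ C^{(log n)²/b}. -/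
open MeasureTheory Filter Set
open scoped ENNReal NNReal Classical

noncomputable section

namespace PAPaper

/-- `p_s^E`: the number of edges of `E` whose older endpoint is `s`. -/
def pE (E : Finset (ℕ × ℕ × ℕ)) (s : ℕ) : ℕ := (E.filter fun e => e.2.2 = s).card

/-- `q_s^E`: the number of edges of `E` strictly straddling `s`. -/
def qE (E : Finset (ℕ × ℕ × ℕ)) (s : ℕ) : ℕ := (E.filter fun e => e.2.2 < s ∧ s < e.1).card

/-- `E` is an edge set: each element `(ℓ, i, j)` satisfies `1 ≤ j < ℓ ≤ n` and
`i ∈ {1, …, m}`, and the pairs `(ℓ, i)` are pairwise distinct. -/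
def IsEdgeSet (m n : ℕ) (E : Finset (ℕ × ℕ × ℕ)) : Prop :=
  (∀ e ∈ E, 1 ≤ e.2.2 ∧ e.2.2 < e.1 ∧ e.1 ≤ n ∧ 1 ≤ e.2.1 ∧ e.2.1 ≤ m) ∧
  ∀ e ∈ E, ∀ e' ∈ E, e.1 = e'.1 → e.2.1 = e'.2.1 → e = e'

/-- `E` is a good edge set with respect to `(n, b)`: each vertex appears at most `4` times
as an endpoint, all endpoints are at least `b`, and `|E| ≤ 4 log_ν n`. -/
def IsGoodEdgeSet (m : ℕ) (δ : ℝ) (n b : ℕ) (E : Finset (ℕ × ℕ × ℕ)) : Prop :=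
  IsEdgeSet m n E ∧
  (∀ v : ℕ, (E.filter fun e => e.1 = v ∨ e.2.2 = v).card ≤ 4) ∧
  (∀ e ∈ E, b ≤ e.2.2) ∧
  (E.card : ℝ) ≤ 4 * Real.logb (nuConst m δ) n


section Helpers

lemma ff_shift (x : ℝ) : ∀ r : ℕ, ff (x + r - 1) r = ∏ t ∈ Finset.range r, (x + t) := by
  intro r
  induction r generalizing x with
  | zero => simp [ff]
  | succ r ih =>
    have h1 : ff (x + (r+1:ℕ) - 1) (r+1)
        = (∏ i ∈ Finset.range r, (x + (r:ℝ) - i)) * (x + r - r) := by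
      rw [ff, Finset.prod_range_succ]
      congr 1
      · apply Finset.prod_congr rfl; intro i _; push_cast; ring
      · push_cast; ring
    have h2 : (∏ i ∈ Finset.range r, (x + (r:ℝ) - i)) = ff ((x+1) + (r:ℕ) - 1) r := by
      rw [ff]; apply Finset.prod_congr rfl; intro i _; push_cast; ring
    rw [h1, h2, ih (x+1), Finset.prod_range_succ']
    have h3 : ∀ i ∈ Finset.range r, (x + 1 + (i:ℝ)) = (x + ((i:ℕ)+1 : ℕ)) := by
      intro i _; push_cast; ring
    rw [Finset.prod_congr rfl h3]
    push_cast
    ring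

lemma log_one_add_le {v : ℝ} (hv : 0 ≤ v) : Real.log (1+v) ≤ v := by
  have := Real.log_le_sub_one_of_pos (by linarith : (0:ℝ) < 1 + v)
  linarith

lemma one_sub_inv_le_log {x : ℝ} (hx : 0 < x) : 1 - 1/x ≤ Real.log x := by
  have := Real.log_le_sub_one_of_pos (show (0:ℝ) < 1/x by positivity)
  rw [Real.log_div one_ne_zero (ne_of_gt hx), Real.log_one] at this
  linarith

lemma le_log_one_add {v : ℝ} (hv : 0 ≤ v) : v - v^2 ≤ Real.log (1+v) := by
  have h := one_sub_inv_le_log (show (0:ℝ) < 1 + v by linarith)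
  have h1 : (0:ℝ) < 1 + v := by linarith
  have h2 : v - v^2 ≤ 1 - 1/(1+v) := by
    have h3 : 1 - 1/(1+v) - (v - v^2) = v^3/(1+v) := by field_simp; ring
    nlinarith [h3, (show (0:ℝ) ≤ v^3/(1+v) by positivity)]
  linarith

lemma abs_log_sub_log_le {x y : ℝ} (hx : 0 < x) (hy : 0 < y) :
    |Real.log x - Real.log y| ≤ |x - y| / min x y := by
  have key : ∀ a b : ℝ, 0 < a → 0 < b → b ≤ a →
      Real.log a - Real.log b ≤ |a - b| / min a b := by
    intro a b ha hb hba
    have h1 : Real.log a - Real.log b = Real.log (a / b) :=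
      (Real.log_div (ne_of_gt ha) (ne_of_gt hb)).symm
    have h2 : Real.log (a / b) ≤ a / b - 1 := Real.log_le_sub_one_of_pos (by positivity)
    have h3 : min a b = b := min_eq_right hba
    rw [h1, h3, abs_of_nonneg (by linarith : (0:ℝ) ≤ a - b)]
    have h4 : a / b - 1 = (a - b) / b := by field_simp
    linarith [h2, h4 ▸ h2]
  rcases le_total x y with h | h
  · have := key y x hy hx h
    rw [abs_sub_comm y x, min_comm y x] at this
    have hlog : Real.log x ≤ Real.log y := Real.log_le_log hx h
    rw [abs_of_nonpos (by linarith : Real.log x - Real.log y ≤ 0)]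
    linarith [this]
  · have := key x y hx hy h
    have hlog : Real.log y ≤ Real.log x := Real.log_le_log hy h
    rw [abs_of_nonneg (by linarith : (0:ℝ) ≤ Real.log x - Real.log y)]
    exact this

lemma sum_inv_sq_le {a : ℕ} (ha : 1 ≤ a) (l : ℕ) :
    ∑ s ∈ Finset.Ico (a+1) l, (1:ℝ)/(s:ℝ)^2 ≤ 1/(a:ℝ) := by
  rcases le_or_gt l (a+1) with h | h
  · rw [Finset.Ico_eq_empty (by omega)]
    simp only [Finset.sum_empty]
    positivity
  · have key : ∀ l : ℕ, a + 1 ≤ l →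
        ∑ s ∈ Finset.Ico (a+1) l, (1:ℝ)/(s:ℝ)^2 ≤ 1/(a:ℝ) - 1/((l:ℝ)-1) := by
      intro l hl
      induction l, hl using Nat.le_induction with
      | base =>
        simp only [Finset.Ico_self, Finset.sum_empty]
        push_cast
        simp
      | succ l hl ih =>
        rw [Finset.sum_Ico_succ_top (by omega)]
        have h1 : (1:ℝ)/(l:ℝ)^2 ≤ 1/((l:ℝ)-1) - 1/(l:ℝ) := by
          have hl2 : (2:ℝ) ≤ (l:ℝ) := by exact_mod_cast (by omega : 2 ≤ l)
          rw [div_sub_div _ _ (by linarith) (by linarith), div_le_div_iff₀ (by positivity) (by nlinarith)]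
          ring_nf; nlinarith
        have : ((l+1:ℕ):ℝ) - 1 = (l:ℝ) := by push_cast; ring
        rw [this]
        linarith
    have := key l (by omega)
    have hl1 : (1:ℝ) ≤ (l:ℝ) - 1 := by
      have : (2:ℝ) ≤ (l:ℝ) := by exact_mod_cast (by omega : 2 ≤ l)
      linarith
    have : (0:ℝ) < (l:ℝ)-1 := by linarith
    have : (0:ℝ) ≤ 1/((l:ℝ)-1) := by positivity
    linarith

lemma sum_inv_le_log {j : ℕ} (hj : 1 ≤ j) : ∀ l : ℕ, j ≤ l →
    ∑ s ∈ Finset.Ico (j+1) (l+1), (1:ℝ)/s ≤ Real.log l - Real.log j := by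
  intro l hl
  induction l, hl using Nat.le_induction with
  | base => simp [Finset.Ico_self]
  | succ l hl ih =>
    rw [Finset.sum_Ico_succ_top (by omega)]
    have hlpos : (0:ℝ) < l := by exact_mod_cast (by omega : 0 < l)
    have h1 : (1:ℝ)/((l+1:ℕ):ℝ) ≤ Real.log ((l+1:ℕ):ℝ) - Real.log l := by
      have hx : (0:ℝ) < ((l+1:ℕ):ℝ)/(l:ℝ) := by positivity
      have := one_sub_inv_le_log hx
      rw [Real.log_div (by positivity) (ne_of_gt hlpos)] at this
      have he : 1 - 1/(((l+1:ℕ):ℝ)/(l:ℝ)) = 1/((l+1:ℕ):ℝ) := by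
        rw [one_div_div]; field_simp; push_cast; ring
      rw [he] at this; exact this
    push_cast at h1 ih ⊢
    linarith

lemma log_le_sum_inv {j : ℕ} (hj : 1 ≤ j) : ∀ l : ℕ, j ≤ l →
    Real.log l - Real.log j ≤ ∑ s ∈ Finset.Ico j l, (1:ℝ)/s := by
  intro l hl
  induction l, hl using Nat.le_induction with
  | base => simp [Finset.Ico_self]
  | succ l hl ih =>
    rw [Finset.sum_Ico_succ_top (by omega)]
    have hlpos : (0:ℝ) < l := by exact_mod_cast (by omega : 0 < l)
    have h1 : Real.log ((l+1:ℕ):ℝ) - Real.log l ≤ (1:ℝ)/l := by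
      have : Real.log (((l+1:ℕ):ℝ)/(l:ℝ)) ≤ ((l+1:ℕ):ℝ)/(l:ℝ) - 1 :=
        Real.log_le_sub_one_of_pos (by positivity)
      rw [Real.log_div (by positivity) (ne_of_gt hlpos)] at this
      have he : ((l+1:ℕ):ℝ)/(l:ℝ) - 1 = 1/(l:ℝ) := by field_simp; push_cast; ring
      rw [he] at this; exact this
    push_cast at h1 ih ⊢
    linarith

lemma q_swap (n : ℕ) (E : Finset (ℕ × ℕ × ℕ))
    (hE : ∀ e ∈ E, 2 ≤ e.2.2 ∧ e.2.2 < e.1 ∧ e.1 ≤ n) (g : ℕ → ℝ) :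
    ∑ s ∈ Finset.Icc 2 n, (qE E s : ℝ) * g s
      = ∑ e ∈ E, ∑ s ∈ Finset.Ico (e.2.2+1) e.1, g s := by
  have h1 : ∀ s, (qE E s : ℝ) * g s
      = ∑ e ∈ E, (if e.2.2 < s ∧ s < e.1 then g s else 0) := by
    intro s
    rw [qE, Finset.card_filter]
    push_cast
    rw [Finset.sum_mul]
    apply Finset.sum_congr rfl
    intro e _
    split <;> simp
  simp only [h1]
  rw [Finset.sum_comm]
  apply Finset.sum_congr rfl
  intro e he
  obtain ⟨h2, h3, h4⟩ := hE e he
  rw [← Finset.sum_filter]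
  apply Finset.sum_congr _ (fun _ _ => rfl)
  ext s
  simp only [Finset.mem_filter, Finset.mem_Icc, Finset.mem_Ico]
  omega

lemma p_swap (n : ℕ) (E : Finset (ℕ × ℕ × ℕ))
    (hE : ∀ e ∈ E, 2 ≤ e.2.2 ∧ e.2.2 < e.1 ∧ e.1 ≤ n) (g : ℕ → ℝ) :
    ∑ s ∈ Finset.Icc 2 n, (pE E s : ℝ) * g s = ∑ e ∈ E, g e.2.2 := by
  have h1 : ∀ s, (pE E s : ℝ) * g s
      = ∑ e ∈ E, (if e.2.2 = s then g s else 0) := by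
    intro s
    rw [pE, Finset.card_filter]
    push_cast
    rw [Finset.sum_mul]
    apply Finset.sum_congr rfl
    intro e _
    split <;> simp
  simp only [h1]
  rw [Finset.sum_comm]
  apply Finset.sum_congr rfl
  intro e he
  obtain ⟨h2, h3, h4⟩ := hE e he
  have : ∀ s ∈ Finset.Icc 2 n, (if e.2.2 = s then g s else 0)
      = (if s = e.2.2 then g e.2.2 else 0) := by
    intro s _
    by_cases h : e.2.2 = s
    · subst h; simp
    · rw [if_neg h, if_neg (fun hh => h hh.symm)]
  rw [Finset.sum_congr rfl this, Finset.sum_ite_eq']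
  rw [if_pos (Finset.mem_Icc.mpr ⟨h2, by omega⟩)]

lemma qterm (m : ℕ) (hm : 2 ≤ m) {δ : ℝ} (hδ : 0 < δ) (s t : ℕ) (hs : 2 ≤ s) :
    |(Real.log (betaC m δ s + t) - Real.log (alphaC m δ + betaC m δ s + t))
      + chiC m δ / s| ≤ (7 + (t:ℝ)) / (s:ℝ)^2 := by
  have hm2 : (2:ℝ) ≤ (m:ℝ) := by exact_mod_cast hm
  have hs2 : (2:ℝ) ≤ (s:ℝ) := by exact_mod_cast hs
  have ht0 : (0:ℝ) ≤ (t:ℝ) := Nat.cast_nonneg t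
  obtain ⟨θ, hθdef⟩ : ∃ θ : ℝ, θ = 2*(m:ℝ) + δ := ⟨_, rfl⟩
  have hθ4 : (4:ℝ) ≤ θ := by rw [hθdef]; linarith
  obtain ⟨α, hαdef⟩ : ∃ α : ℝ, α = (m:ℝ) + δ := ⟨_, rfl⟩
  have hα : (0:ℝ) < α := by rw [hαdef]; linarith
  have hαθ : α ≤ θ := by rw [hαdef, hθdef]; linarith
  obtain ⟨b, hbdef⟩ : ∃ b : ℝ, b = betaC m δ s + t := ⟨_, rfl⟩
  rw [show Real.log (betaC m δ s + (t:ℝ)) = Real.log b by rw [hbdef]]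
  have hβ : b = θ*((s:ℝ)-1) - (m:ℝ) + t := by rw [hbdef, betaC, hθdef]; ring
  have hb2 : α*(s:ℝ)/2 ≤ b := by rw [hβ, hαdef]; nlinarith
  have hbpos : (0:ℝ) < b := by nlinarith
  have hv1 : α/b ≤ 2/(s:ℝ) := by
    rw [div_le_div_iff₀ hbpos (by linarith)]
    nlinarith
  have hv0 : 0 ≤ α/b := by positivity
  have key1 : Real.log b - Real.log (α + b) = -Real.log (1 + α/b) := by
    have he : α + b = b * (1 + α/b) := by field_simp; ring
    rw [he, Real.log_mul (ne_of_gt hbpos) (by positivity)]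
    ring
  have key2 : |Real.log (1 + α/b) - α/b| ≤ (α/b)^2 := by
    rw [abs_le]
    constructor
    · linarith [le_log_one_add hv0]
    · linarith [log_one_add_le hv0, sq_nonneg (α/b)]
  have hχ : chiC m δ / s = α/(θ*(s:ℝ)) := by
    rw [chiC, hαdef, hθdef, div_div]
  have hvdiff : α/(θ*(s:ℝ)) - α/b = α*(b - θ*(s:ℝ))/((θ*(s:ℝ))*b) := by
    field_simp
  have hbs : b - θ*(s:ℝ) = (t:ℝ) - θ - (m:ℝ) := by rw [hβ]; ring
  have habs : |b - θ*(s:ℝ)| ≤ θ + (m:ℝ) + t := by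
    rw [hbs, abs_le]; constructor <;> linarith
  have hθpos : (0:ℝ) < θ := by linarith
  have hspos : (0:ℝ) < (s:ℝ) := by linarith
  have key3 : |α/(θ*(s:ℝ)) - α/b| ≤ (3 + (t:ℝ))/(s:ℝ)^2 := by
    have hden : (0:ℝ) < (θ*(s:ℝ))*b := mul_pos (mul_pos hθpos hspos) hbpos
    rw [hvdiff, abs_div, abs_mul, abs_of_nonneg (le_of_lt hα), abs_of_pos hden]
    rw [div_le_div_iff₀ hden (by positivity)]
    have h1' : α * |b - θ*(s:ℝ)| * (s:ℝ)^2 ≤ α * (θ + (m:ℝ) + t) * (s:ℝ)^2 :=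
      mul_le_mul_of_nonneg_right
        (mul_le_mul_of_nonneg_left habs (le_of_lt hα)) (sq_nonneg _)
    have hA : 2*(θ + (m:ℝ) + t) ≤ (3 + (t:ℝ))*θ := by nlinarith
    have hD : 2*(θ + (m:ℝ) + t)*(α*(s:ℝ)^2/2) ≤ ((3 + (t:ℝ))*θ)*(α*(s:ℝ)^2/2) :=
      mul_le_mul_of_nonneg_right hA (by positivity)
    have h2 : ((3 + (t:ℝ))*θ*(s:ℝ))*(α*(s:ℝ)/2) ≤ ((3 + (t:ℝ))*θ*(s:ℝ))*b :=
      mul_le_mul_of_nonneg_left hb2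
        (mul_nonneg (mul_nonneg (by linarith) hθpos.le) hspos.le)
    linarith [h1', hD, h2]
  have hvsq : (α/b)^2 ≤ 4/(s:ℝ)^2 := by
    have : (α/b)^2 ≤ (2/(s:ℝ))^2 := by
      apply pow_le_pow_left₀ hv0 hv1
    calc (α/b)^2 ≤ (2/(s:ℝ))^2 := this
      _ = 4/(s:ℝ)^2 := by ring
  have hgoal : Real.log (alphaC m δ + betaC m δ s + t) = Real.log (α + b) := by
    rw [hαdef, hbdef, alphaC]; ring_nf
  rw [hgoal, hχ, key1]
  have habs2 : |-Real.log (1 + α/b) + α/(θ*(s:ℝ))|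
      ≤ |Real.log (1 + α/b) - α/b| + |α/(θ*(s:ℝ)) - α/b| := by
    calc |-Real.log (1 + α/b) + α/(θ*(s:ℝ))|
        = |(Real.log (1 + α/b) - α/b) - (α/(θ*(s:ℝ)) - α/b)| := by rw [← abs_neg]; ring_nf
      _ ≤ _ := abs_sub _ _
  calc |-Real.log (1 + α/b) + α/(θ*(s:ℝ))| ≤ _ := habs2
    _ ≤ (α/b)^2 + (3 + (t:ℝ))/(s:ℝ)^2 := add_le_add key2 key3
    _ ≤ 4/(s:ℝ)^2 + (3 + (t:ℝ))/(s:ℝ)^2 := by linarith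
    _ = (7 + (t:ℝ))/(s:ℝ)^2 := by ring

lemma pterm (m : ℕ) (hm : 2 ≤ m) {δ : ℝ} (hδ : 0 < δ) (s q t : ℕ) (hs : 2 ≤ s) :
    |Real.log (alphaC m δ + betaC m δ s + q + t)
      - Real.log ((2*(m:ℝ)+δ) * s)| ≤ (2 + (q:ℝ) + t) / (s:ℝ) := by
  have hm2 : (2:ℝ) ≤ (m:ℝ) := by exact_mod_cast hm
  have hs2 : (2:ℝ) ≤ (s:ℝ) := by exact_mod_cast hs
  have ht0 : (0:ℝ) ≤ (t:ℝ) := Nat.cast_nonneg t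
  have hq0 : (0:ℝ) ≤ (q:ℝ) := Nat.cast_nonneg q
  obtain ⟨θ, hθdef⟩ : ∃ θ : ℝ, θ = 2*(m:ℝ) + δ := ⟨_, rfl⟩
  have hθ4 : (4:ℝ) ≤ θ := by rw [hθdef]; linarith
  rw [show alphaC m δ + betaC m δ s + (q:ℝ) + t = alphaC m δ + betaC m δ s + q + t from rfl]
  obtain ⟨x, hxdef⟩ : ∃ x : ℝ, x = alphaC m δ + betaC m δ s + q + t := ⟨_, rfl⟩
  rw [← hθdef, ← hxdef]
  have hx : x = θ*((s:ℝ)-1) + δ + q + t := by rw [hxdef, alphaC, betaC, hθdef]; ring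
  have hxpos : (0:ℝ) < x := by rw [hx]; nlinarith
  have hypos : (0:ℝ) < θ * s := by nlinarith
  have hmin : θ*(s:ℝ)/2 ≤ min x (θ*(s:ℝ)) := by
    apply le_min
    · rw [hx]; nlinarith
    · nlinarith
  have habs : |x - θ*(s:ℝ)| ≤ θ + q + t := by
    have : x - θ*(s:ℝ) = δ + q + t - θ := by rw [hx]; ring
    rw [this, abs_le]
    constructor <;> [linarith; (rw [hθdef]; linarith)]
  calc |Real.log x - Real.log (θ*(s:ℝ))|
      ≤ |x - θ*(s:ℝ)| / min x (θ*(s:ℝ)) := abs_log_sub_log_le hxpos hypos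
    _ ≤ (θ + q + t) / (θ*(s:ℝ)/2) := by
        apply div_le_div₀ (by linarith) habs (by nlinarith) hmin
    _ ≤ (2 + (q:ℝ) + t) / (s:ℝ) := by
        rw [div_le_div_iff₀ (by nlinarith) (by linarith)]
        have hA : 2*(θ + (q:ℝ) + t) ≤ (2 + (q:ℝ) + t)*θ := by nlinarith
        have := mul_le_mul_of_nonneg_right hA (show (0:ℝ) ≤ (s:ℝ)/2 by linarith)
        nlinarith [this]

end Helpers

set_option maxHeartbeats 2000000 in
/-- two-sided bound for the falling-factorial weight of a good edge set. -/
theorem edge_set_weight_two_sided_bound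
    (m : ℕ) (hm : 2 ≤ m) (δ : ℝ) (hδ : 0 < δ) :
    ∃ c C : ℝ, 0 < c ∧ c < 1 ∧ 1 < C ∧
      ∀ n b : ℕ, ∀ E : Finset (ℕ × ℕ × ℕ),
        2 ≤ n → 2 ≤ b → b ≤ n → IsGoodEdgeSet m δ n b E →
        c ^ (Real.log n ^ 2 / b) ≤
          (∏ s ∈ Finset.Icc 2 n,
            ff (betaC m δ s + qE E s - 1) (qE E s) /
              ff (alphaC m δ + betaC m δ s + pE E s + qE E s - 1) (pE E s + qE E s)) *
            (2 * (m : ℝ) + δ) ^ E.card *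
            ∏ e ∈ E, ((e.2.2 : ℝ) ^ (1 - chiC m δ) * (e.1 : ℝ) ^ chiC m δ) ∧
        (∏ s ∈ Finset.Icc 2 n,
            ff (betaC m δ s + qE E s - 1) (qE E s) /
              ff (alphaC m δ + betaC m δ s + pE E s + qE E s - 1) (pE E s + qE E s)) *
            (2 * (m : ℝ) + δ) ^ E.card *
            ∏ e ∈ E, ((e.2.2 : ℝ) ^ (1 - chiC m δ) * (e.1 : ℝ) ^ chiC m δ) ≤
          C ^ (Real.log n ^ 2 / b) := by
  have hmR : (2:ℝ) ≤ (m:ℝ) := by exact_mod_cast hm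
  have hθpos : (0:ℝ) < 2*(m:ℝ)+δ := by linarith
  have hν4 : (4:ℝ) ≤ nuConst m δ := by
    rw [nuConst]
    have hsq : (0:ℝ) ≤ Real.sqrt ((m:ℝ)*((m:ℝ)-1)*((m:ℝ)+δ)*((m:ℝ)+1+δ)) :=
      Real.sqrt_nonneg _
    have h1 : 2*δ ≤ (m:ℝ)*((m:ℝ)+δ) + Real.sqrt ((m:ℝ)*((m:ℝ)-1)*((m:ℝ)+δ)*((m:ℝ)+1+δ)) := by
      nlinarith
    have h2 : (2:ℝ) ≤ ((m:ℝ)*((m:ℝ)+δ) + Real.sqrt ((m:ℝ)*((m:ℝ)-1)*((m:ℝ)+δ)*((m:ℝ)+1+δ)))/δ := by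
      rw [le_div_iff₀ hδ]; linarith
    linarith
  have hlν : 0 < Real.log (nuConst m δ) := Real.log_pos (by linarith)
  have hl2 : 0 < Real.log 2 := Real.log_pos one_lt_two
  obtain ⟨D, hD⟩ : ∃ D : ℝ, D = 1/Real.log 2 + 4/Real.log (nuConst m δ) := ⟨_, rfl⟩
  have hDpos : 0 < D := by rw [hD]; positivity
  obtain ⟨K, hK⟩ : ∃ K : ℝ, K = 10*D^2 := ⟨_, rfl⟩
  have hKpos : 0 < K := by rw [hK]; positivity
  refine ⟨Real.exp (-K), Real.exp K, Real.exp_pos _, ?_, ?_, ?_⟩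
  · calc Real.exp (-K) < Real.exp 0 := Real.exp_lt_exp.mpr (by linarith)
      _ = 1 := Real.exp_zero
  · calc (1:ℝ) = Real.exp 0 := Real.exp_zero.symm
      _ < Real.exp K := Real.exp_lt_exp.mpr hKpos
  intro n b E hn hb hbn hGood
  obtain ⟨⟨hcond, -⟩, -, hbj, hcard⟩ := hGood
  have hn2 : (2:ℝ) ≤ (n:ℝ) := by exact_mod_cast hn
  have hbR2 : (2:ℝ) ≤ (b:ℝ) := by exact_mod_cast hb
  have hbRpos : (0:ℝ) < (b:ℝ) := by linarith
  have hedge : ∀ e ∈ E, 2 ≤ e.2.2 ∧ e.2.2 < e.1 ∧ e.1 ≤ n := fun e he =>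
    ⟨le_trans hb (hbj e he), (hcond e he).2.1, (hcond e he).2.2.1⟩
  set L := Real.log (n:ℝ) with hL
  have hLl2 : Real.log 2 ≤ L := Real.log_le_log (by norm_num) hn2
  have hLpos : 0 < L := lt_of_lt_of_le hl2 hLl2
  rw [Real.logb] at hcard
  have h1Q : 1 + (E.card:ℝ) ≤ D*L := by
    have h1 : 1 ≤ L/Real.log 2 := (one_le_div hl2).mpr hLl2
    have h2 : D*L = L/Real.log 2 + 4*(L/Real.log (nuConst m δ)) := by rw [hD]; ring
    have h3 : (E.card:ℝ) ≤ 4*(L/Real.log (nuConst m δ)) := hcard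
    linarith
  have hQ0 : (0:ℝ) ≤ (E.card:ℝ) := Nat.cast_nonneg _
  -- positivity of factors
  have hβt : ∀ s : ℕ, 2 ≤ s → ∀ t : ℕ, (0:ℝ) < betaC m δ s + t := by
    intro s hs t
    have hs2 : (2:ℝ) ≤ (s:ℝ) := by exact_mod_cast hs
    rw [betaC]
    have h1 := mul_le_mul_of_nonneg_right
      (show (1:ℝ) ≤ 2*(s:ℝ)-3 by linarith) (show (0:ℝ) ≤ (m:ℝ) by linarith)
    have h2 := mul_le_mul_of_nonneg_right
      (show (1:ℝ) ≤ (s:ℝ)-1 by linarith) hδ.le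
    have h3 : (0:ℝ) ≤ (t:ℝ) := Nat.cast_nonneg t
    linarith
  have hαβt : ∀ s : ℕ, 2 ≤ s → ∀ t : ℕ, (0:ℝ) < alphaC m δ + betaC m δ s + t := by
    intro s hs t
    have := hβt s hs t
    rw [alphaC]; linarith
  have hNpos : ∀ s ∈ Finset.Icc 2 n, (0:ℝ) <
      ∏ t ∈ Finset.range (qE E s), (betaC m δ s + t) :=
    fun s hs => Finset.prod_pos fun t _ => hβt s (Finset.mem_Icc.mp hs).1 t
  have hDspos : ∀ s ∈ Finset.Icc 2 n, (0:ℝ) <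
      ∏ t ∈ Finset.range (pE E s + qE E s), (alphaC m δ + betaC m δ s + t) :=
    fun s hs => Finset.prod_pos fun t _ => hαβt s (Finset.mem_Icc.mp hs).1 t
  have hprod_eq : (∏ s ∈ Finset.Icc 2 n,
      ff (betaC m δ s + qE E s - 1) (qE E s) /
        ff (alphaC m δ + betaC m δ s + pE E s + qE E s - 1) (pE E s + qE E s))
      = ∏ s ∈ Finset.Icc 2 n,
        ((∏ t ∈ Finset.range (qE E s), (betaC m δ s + t)) /
          ∏ t ∈ Finset.range (pE E s + qE E s), (alphaC m δ + betaC m δ s + t)) := by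
    apply Finset.prod_congr rfl
    intro s _
    rw [show alphaC m δ + betaC m δ s + (pE E s : ℝ) + (qE E s : ℝ) - 1
        = (alphaC m δ + betaC m δ s) + ((pE E s + qE E s : ℕ) : ℝ) - 1 by push_cast; ring]
    rw [ff_shift, ff_shift]
  rw [hprod_eq]
  set P := (∏ s ∈ Finset.Icc 2 n,
      ((∏ t ∈ Finset.range (qE E s), (betaC m δ s + t)) /
        ∏ t ∈ Finset.range (pE E s + qE E s), (alphaC m δ + betaC m δ s + t))) *
      (2*(m:ℝ)+δ)^E.card *
      ∏ e ∈ E, ((e.2.2:ℝ)^(1-chiC m δ) * (e.1:ℝ)^(chiC m δ)) with hPdef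
  have hwpos : ∀ e ∈ E, (0:ℝ) < (e.2.2:ℝ)^(1-chiC m δ) * (e.1:ℝ)^(chiC m δ) := by
    intro e he
    have h1 : (0:ℝ) < (e.2.2:ℝ) := by
      have := (hedge e he).1; exact_mod_cast (by omega : 0 < e.2.2)
    have h2 : (0:ℝ) < (e.1:ℝ) := by
      have h := (hedge e he); exact_mod_cast (by omega : 0 < e.1)
    exact mul_pos (Real.rpow_pos_of_pos h1 _) (Real.rpow_pos_of_pos h2 _)
  have hprodpos : (0:ℝ) < ∏ s ∈ Finset.Icc 2 n,
      ((∏ t ∈ Finset.range (qE E s), (betaC m δ s + t)) /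
        ∏ t ∈ Finset.range (pE E s + qE E s), (alphaC m δ + betaC m δ s + t)) :=
    Finset.prod_pos fun s hs => div_pos (hNpos s hs) (hDspos s hs)
  have hWpos : (0:ℝ) < ∏ e ∈ E, ((e.2.2:ℝ)^(1-chiC m δ) * (e.1:ℝ)^(chiC m δ)) :=
    Finset.prod_pos hwpos
  have hpowpos : (0:ℝ) < (2*(m:ℝ)+δ)^E.card := pow_pos hθpos _
  have hPpos : 0 < P := by
    rw [hPdef]; exact mul_pos (mul_pos hprodpos hpowpos) hWpos
  -- log expansion
  have hlogratio : ∀ s ∈ Finset.Icc 2 n,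
      Real.log ((∏ t ∈ Finset.range (qE E s), (betaC m δ s + t)) /
        ∏ t ∈ Finset.range (pE E s + qE E s), (alphaC m δ + betaC m δ s + t))
      = (∑ t ∈ Finset.range (qE E s),
          (Real.log (betaC m δ s + t) - Real.log (alphaC m δ + betaC m δ s + t)))
        - ∑ t ∈ Finset.range (pE E s),
            Real.log (alphaC m δ + betaC m δ s + qE E s + t) := by
    intro s hs
    have hs2 : 2 ≤ s := (Finset.mem_Icc.mp hs).1
    rw [Real.log_div (ne_of_gt (hNpos s hs)) (ne_of_gt (hDspos s hs))]
    rw [Real.log_prod (fun t _ => ne_of_gt (hβt s hs2 t)),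
        Real.log_prod (fun t _ => ne_of_gt (hαβt s hs2 t))]
    rw [add_comm (pE E s) (qE E s), Finset.sum_range_add]
    have hc : ∀ t ∈ Finset.range (pE E s),
        Real.log (alphaC m δ + betaC m δ s + ((qE E s + t : ℕ) : ℝ))
        = Real.log (alphaC m δ + betaC m δ s + qE E s + t) := by
      intro t _
      have : alphaC m δ + betaC m δ s + ((qE E s + t : ℕ) : ℝ)
          = alphaC m δ + betaC m δ s + qE E s + t := by push_cast; ring
      rw [this]
    rw [Finset.sum_congr rfl hc, Finset.sum_sub_distrib]
    ring
  have hPE2 : Real.log P =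
      (∑ s ∈ Finset.Icc 2 n, ∑ t ∈ Finset.range (qE E s),
        (Real.log (betaC m δ s + t) - Real.log (alphaC m δ + betaC m δ s + t)))
      - (∑ s ∈ Finset.Icc 2 n, ∑ t ∈ Finset.range (pE E s),
          Real.log (alphaC m δ + betaC m δ s + qE E s + t))
      + (E.card:ℝ)*Real.log (2*(m:ℝ)+δ)
      + ∑ e ∈ E, ((1 - chiC m δ)*Real.log e.2.2 + chiC m δ*Real.log e.1) := by
    rw [hPdef]
    rw [Real.log_mul (ne_of_gt (mul_pos hprodpos hpowpos)) (ne_of_gt hWpos),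
        Real.log_mul (ne_of_gt hprodpos) (ne_of_gt hpowpos),
        Real.log_prod (fun s hs => ne_of_gt (div_pos (hNpos s hs) (hDspos s hs))),
        Real.log_pow]
    rw [Finset.sum_congr rfl hlogratio]
    have hWlog : ∀ e ∈ E,
        Real.log ((e.2.2:ℝ)^(1-chiC m δ) * (e.1:ℝ)^(chiC m δ))
        = (1 - chiC m δ)*Real.log e.2.2 + chiC m δ*Real.log e.1 := by
      intro e he
      have h1 : (0:ℝ) < (e.2.2:ℝ) := by
        have := (hedge e he).1; exact_mod_cast (by omega : 0 < e.2.2)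
      have h2 : (0:ℝ) < (e.1:ℝ) := by
        have h := (hedge e he); exact_mod_cast (by omega : 0 < e.1)
      rw [Real.log_mul (ne_of_gt (Real.rpow_pos_of_pos h1 _))
          (ne_of_gt (Real.rpow_pos_of_pos h2 _)),
        Real.log_rpow h1, Real.log_rpow h2]
    rw [Real.log_prod (fun e he => ne_of_gt (hwpos e he)),
        Finset.sum_congr rfl hWlog, Finset.sum_sub_distrib]
  have hq_le : ∀ s, qE E s ≤ E.card := fun s => Finset.card_filter_le E _
  have hp_le : ∀ s, pE E s ≤ E.card := fun s => Finset.card_filter_le E _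
  -- B1 : per-s bound for the q-part
  have hb1s : ∀ s ∈ Finset.Icc 2 n,
      |(∑ t ∈ Finset.range (qE E s),
          (Real.log (betaC m δ s + t) - Real.log (alphaC m δ + betaC m δ s + t)))
        + chiC m δ * ((qE E s : ℝ) * (1/(s:ℝ)))|
      ≤ (7 + (E.card:ℝ)) * ((qE E s : ℝ) * (1/(s:ℝ)^2)) := by
    intro s hs
    have hs2 : 2 ≤ s := (Finset.mem_Icc.mp hs).1
    have hsR : (2:ℝ) ≤ (s:ℝ) := by exact_mod_cast hs2
    have hsum_const : chiC m δ * ((qE E s : ℝ)*(1/(s:ℝ)))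
        = ∑ t ∈ Finset.range (qE E s), chiC m δ/(s:ℝ) := by
      rw [Finset.sum_const, Finset.card_range, nsmul_eq_mul]; ring
    rw [hsum_const, ← Finset.sum_add_distrib]
    refine le_trans (Finset.abs_sum_le_sum_abs _ _) ?_
    refine le_trans (Finset.sum_le_sum
      (g := fun _ => (7 + (E.card:ℝ))/(s:ℝ)^2) (fun t ht => ?_)) ?_
    · refine le_trans (qterm m hm hδ s t hs2) ?_
      have htQ : (t:ℝ) ≤ (E.card:ℝ) := by
        exact_mod_cast le_of_lt (lt_of_lt_of_le (Finset.mem_range.mp ht) (hq_le s))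
      show (7+(t:ℝ))/(s:ℝ)^2 ≤ (7 + (E.card:ℝ))/(s:ℝ)^2
      gcongr
    · refine le_of_eq ?_
      rw [Finset.sum_const, Finset.card_range, nsmul_eq_mul]
      ring
  have hB1 : |(∑ s ∈ Finset.Icc 2 n, ∑ t ∈ Finset.range (qE E s),
        (Real.log (betaC m δ s + t) - Real.log (alphaC m δ + betaC m δ s + t)))
      + chiC m δ * ∑ s ∈ Finset.Icc 2 n, (qE E s : ℝ)*(1/(s:ℝ))|
      ≤ (7 + (E.card:ℝ)) * ∑ s ∈ Finset.Icc 2 n, (qE E s : ℝ)*(1/(s:ℝ)^2) := by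
    rw [Finset.mul_sum, ← Finset.sum_add_distrib]
    refine le_trans (Finset.abs_sum_le_sum_abs _ _) ?_
    rw [Finset.mul_sum]
    exact Finset.sum_le_sum hb1s
  -- B2 : the q harmonic-square sum
  have hqsw2 := q_swap n E hedge (fun s => 1/(s:ℝ)^2)
  have hqsum2 : ∑ s ∈ Finset.Icc 2 n, (qE E s : ℝ)*(1/(s:ℝ)^2)
      ≤ (E.card:ℝ)*(1/(b:ℝ)) := by
    rw [hqsw2]
    refine le_trans (Finset.sum_le_sum (g := fun _ => 1/(b:ℝ)) (fun e he => ?_)) ?_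
    · have hj1 : 1 ≤ e.2.2 := by have := (hedge e he).1; omega
      refine le_trans (sum_inv_sq_le hj1 e.1) ?_
      apply one_div_le_one_div_of_le hbRpos
      exact_mod_cast hbj e he
    · rw [Finset.sum_const, nsmul_eq_mul]
  -- B3 : q harmonic sum vs log
  have hqsw1 := q_swap n E hedge (fun s => 1/(s:ℝ))
  have hedgelog : ∀ e ∈ E,
      |(∑ s ∈ Finset.Ico (e.2.2+1) e.1, 1/(s:ℝ)) - (Real.log e.1 - Real.log e.2.2)|
      ≤ 1/(b:ℝ) := by
    intro e he
    obtain ⟨hj2, hjl, hln⟩ := hedge e he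
    have hj1 : 1 ≤ e.2.2 := by omega
    have hup : ∑ s ∈ Finset.Ico (e.2.2+1) e.1, 1/(s:ℝ)
        ≤ Real.log e.1 - Real.log e.2.2 := by
      have hsub : Finset.Ico (e.2.2+1) e.1 ⊆ Finset.Ico (e.2.2+1) (e.1+1) :=
        Finset.Ico_subset_Ico le_rfl (by omega)
      refine le_trans (Finset.sum_le_sum_of_subset_of_nonneg hsub
        (fun i _ _ => by positivity)) ?_
      exact sum_inv_le_log hj1 e.1 (by omega)
    have hlo : Real.log e.1 - Real.log e.2.2
        ≤ 1/(e.2.2:ℝ) + ∑ s ∈ Finset.Ico (e.2.2+1) e.1, 1/(s:ℝ) := by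
      have h := log_le_sum_inv hj1 e.1 (by omega)
      rw [Finset.sum_eq_sum_Ico_succ_bot hjl] at h
      exact h
    have hjb : 1/(e.2.2:ℝ) ≤ 1/(b:ℝ) := by
      apply one_div_le_one_div_of_le hbRpos
      exact_mod_cast hbj e he
    rw [abs_le]
    constructor
    · linarith
    · have h0 : (0:ℝ) ≤ 1/(b:ℝ) := by positivity
      linarith
  have hB3 : |chiC m δ * ∑ s ∈ Finset.Icc 2 n, (qE E s : ℝ)*(1/(s:ℝ))
      - chiC m δ * ∑ e ∈ E, (Real.log e.1 - Real.log e.2.2)|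
      ≤ (E.card:ℝ)*(1/(b:ℝ)) := by
    rw [hqsw1, ← mul_sub, ← Finset.sum_sub_distrib, abs_mul]
    have hχ0 : 0 ≤ chiC m δ := by rw [chiC]; positivity
    have hχ1 : chiC m δ ≤ 1 := by
      rw [chiC, div_le_one (by linarith)]; linarith
    refine le_trans (mul_le_mul (by rwa [abs_of_nonneg hχ0])
      (le_trans (Finset.abs_sum_le_sum_abs _ _) (Finset.sum_le_sum hedgelog))
      (abs_nonneg _) zero_le_one) ?_
    rw [one_mul, Finset.sum_const, nsmul_eq_mul]
  -- B4 : p-part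
  have hb4s : ∀ s ∈ Finset.Icc 2 n,
      |(∑ t ∈ Finset.range (pE E s),
          Real.log (alphaC m δ + betaC m δ s + qE E s + t))
        - (pE E s : ℝ)*Real.log ((2*(m:ℝ)+δ)*(s:ℝ))|
      ≤ (2 + 2*(E.card:ℝ)) * ((pE E s : ℝ)*(1/(s:ℝ))) := by
    intro s hs
    have hs2 : 2 ≤ s := (Finset.mem_Icc.mp hs).1
    have hsR : (2:ℝ) ≤ (s:ℝ) := by exact_mod_cast hs2
    have hconst : (pE E s : ℝ)*Real.log ((2*(m:ℝ)+δ)*(s:ℝ))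
        = ∑ t ∈ Finset.range (pE E s), Real.log ((2*(m:ℝ)+δ)*(s:ℝ)) := by
      rw [Finset.sum_const, Finset.card_range, nsmul_eq_mul]
    rw [hconst, ← Finset.sum_sub_distrib]
    refine le_trans (Finset.abs_sum_le_sum_abs _ _) ?_
    refine le_trans (Finset.sum_le_sum
      (g := fun _ => (2 + 2*(E.card:ℝ))/(s:ℝ)) (fun t ht => ?_)) ?_
    · refine le_trans (pterm m hm hδ s (qE E s) t hs2) ?_
      have htQ : (t:ℝ) ≤ (E.card:ℝ) := by
        exact_mod_cast le_of_lt (lt_of_lt_of_le (Finset.mem_range.mp ht) (hp_le s))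
      have hqQ : ((qE E s : ℕ):ℝ) ≤ (E.card:ℝ) := by exact_mod_cast hq_le s
      show (2+(qE E s:ℝ)+(t:ℝ))/(s:ℝ) ≤ (2 + 2*(E.card:ℝ))/(s:ℝ)
      exact (div_le_div_iff_of_pos_right (by linarith : (0:ℝ) < (s:ℝ))).mpr (by linarith)
    · refine le_of_eq ?_
      rw [Finset.sum_const, Finset.card_range, nsmul_eq_mul]
      ring
  have hB4 : |(∑ s ∈ Finset.Icc 2 n, ∑ t ∈ Finset.range (pE E s),
        Real.log (alphaC m δ + betaC m δ s + qE E s + t))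
      - ∑ s ∈ Finset.Icc 2 n, (pE E s : ℝ)*Real.log ((2*(m:ℝ)+δ)*(s:ℝ))|
      ≤ (2 + 2*(E.card:ℝ)) * ∑ s ∈ Finset.Icc 2 n, (pE E s : ℝ)*(1/(s:ℝ)) := by
    rw [← Finset.sum_sub_distrib]
    refine le_trans (Finset.abs_sum_le_sum_abs _ _) ?_
    rw [Finset.mul_sum]
    exact Finset.sum_le_sum hb4s
  have hpsw1 := p_swap n E hedge (fun s => 1/(s:ℝ))
  have hpsum : ∑ s ∈ Finset.Icc 2 n, (pE E s : ℝ)*(1/(s:ℝ))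
      ≤ (E.card:ℝ)*(1/(b:ℝ)) := by
    rw [hpsw1]
    refine le_trans (Finset.sum_le_sum (g := fun _ => 1/(b:ℝ)) (fun e he => ?_)) ?_
    · apply one_div_le_one_div_of_le hbRpos
      exact_mod_cast hbj e he
    · rw [Finset.sum_const, nsmul_eq_mul]
  have hpswl := p_swap n E hedge (fun s => Real.log ((2*(m:ℝ)+δ)*(s:ℝ)))
  have hT2 : ∑ s ∈ Finset.Icc 2 n, (pE E s : ℝ)*Real.log ((2*(m:ℝ)+δ)*(s:ℝ))
      = (E.card:ℝ)*Real.log (2*(m:ℝ)+δ) + ∑ e ∈ E, Real.log e.2.2 := by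
    rw [hpswl]
    have hc : ∀ e ∈ E, Real.log ((2*(m:ℝ)+δ)*(e.2.2:ℝ))
        = Real.log (2*(m:ℝ)+δ) + Real.log e.2.2 := by
      intro e he
      have hj : ((e.2.2:ℕ):ℝ) ≠ 0 := by
        have := (hedge e he).1
        exact_mod_cast (by omega : e.2.2 ≠ 0)
      rw [Real.log_mul (ne_of_gt hθpos) hj]
    rw [Finset.sum_congr rfl hc, Finset.sum_add_distrib, Finset.sum_const, nsmul_eq_mul]
  -- exact cancellation
  have haux : (∑ e ∈ E, ((1 - chiC m δ)*Real.log e.2.2 + chiC m δ*Real.log e.1))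
      - chiC m δ * (∑ e ∈ E, (Real.log e.1 - Real.log e.2.2))
      - ∑ e ∈ E, Real.log e.2.2 = 0 := by
    rw [Finset.mul_sum, ← Finset.sum_sub_distrib, ← Finset.sum_sub_distrib]
    exact Finset.sum_eq_zero (fun e _ => by ring)
  -- assemble
  have hlogabs : |Real.log P| ≤ K*(L^2/(b:ℝ)) := by
    rw [hPE2]
    have hsplit :
        (∑ s ∈ Finset.Icc 2 n, ∑ t ∈ Finset.range (qE E s),
          (Real.log (betaC m δ s + t) - Real.log (alphaC m δ + betaC m δ s + t)))
        - (∑ s ∈ Finset.Icc 2 n, ∑ t ∈ Finset.range (pE E s),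
            Real.log (alphaC m δ + betaC m δ s + qE E s + t))
        + (E.card:ℝ)*Real.log (2*(m:ℝ)+δ)
        + (∑ e ∈ E, ((1 - chiC m δ)*Real.log e.2.2 + chiC m δ*Real.log e.1))
      = ((∑ s ∈ Finset.Icc 2 n, ∑ t ∈ Finset.range (qE E s),
          (Real.log (betaC m δ s + t) - Real.log (alphaC m δ + betaC m δ s + t)))
          + chiC m δ * ∑ s ∈ Finset.Icc 2 n, (qE E s : ℝ)*(1/(s:ℝ)))
        - (chiC m δ * ∑ s ∈ Finset.Icc 2 n, (qE E s : ℝ)*(1/(s:ℝ))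
            - chiC m δ * ∑ e ∈ E, (Real.log e.1 - Real.log e.2.2))
        - ((∑ s ∈ Finset.Icc 2 n, ∑ t ∈ Finset.range (pE E s),
            Real.log (alphaC m δ + betaC m δ s + qE E s + t))
          - ∑ s ∈ Finset.Icc 2 n, (pE E s : ℝ)*Real.log ((2*(m:ℝ)+δ)*(s:ℝ))) := by
      rw [hT2]
      linarith [haux]
    rw [hsplit]
    have htri : ∀ x y z : ℝ, |x - y - z| ≤ |x| + |y| + |z| := by
      intro x y z
      calc |x - y - z| ≤ |x - y| + |z| := abs_sub _ _
        _ ≤ |x| + |y| + |z| := by linarith [abs_sub x y]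
    refine le_trans (htri _ _ _) ?_
    have e1 : (7 + (E.card:ℝ)) * (∑ s ∈ Finset.Icc 2 n, (qE E s : ℝ)*(1/(s:ℝ)^2))
        ≤ (7 + (E.card:ℝ)) * ((E.card:ℝ)*(1/(b:ℝ))) :=
      mul_le_mul_of_nonneg_left hqsum2 (by linarith)
    have e4 : (2 + 2*(E.card:ℝ)) * (∑ s ∈ Finset.Icc 2 n, (pE E s : ℝ)*(1/(s:ℝ)))
        ≤ (2 + 2*(E.card:ℝ)) * ((E.card:ℝ)*(1/(b:ℝ))) :=
      mul_le_mul_of_nonneg_left hpsum (by linarith)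
    have hstep1 : (10 + 3*(E.card:ℝ)) * ((E.card:ℝ)*(1/(b:ℝ)))
        ≤ 10*(1 + (E.card:ℝ))^2 * (1/(b:ℝ)) := by
      have hbinv : (0:ℝ) ≤ 1/(b:ℝ) := by positivity
      have hA : (10 + 3*(E.card:ℝ)) * (E.card:ℝ) ≤ 10*(1 + (E.card:ℝ))^2 := by nlinarith [hQ0, sq_nonneg ((E.card:ℝ))]
      calc (10 + 3*(E.card:ℝ)) * ((E.card:ℝ)*(1/(b:ℝ)))
          = ((10 + 3*(E.card:ℝ)) * (E.card:ℝ)) * (1/(b:ℝ)) := by ring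
        _ ≤ 10*(1 + (E.card:ℝ))^2 * (1/(b:ℝ)) := mul_le_mul_of_nonneg_right hA hbinv
    have hsq : (1 + (E.card:ℝ))^2 ≤ (D*L)^2 := by
      apply pow_le_pow_left₀ (by linarith) h1Q
    have hstep2 : 10*(1 + (E.card:ℝ))^2 * (1/(b:ℝ)) ≤ 10*(D*L)^2 * (1/(b:ℝ)) := by
      have h10 := mul_le_mul_of_nonneg_right
        (mul_le_mul_of_nonneg_left hsq (by norm_num : (0:ℝ) ≤ 10))
        (show (0:ℝ) ≤ 1/(b:ℝ) by positivity)
      linarith [h10]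
    have hEq : 10*(D*L)^2*(1/(b:ℝ)) = K*(L^2/(b:ℝ)) := by rw [hK]; ring
    linarith [hB1, hB3, hB4, e1, e4, hstep1, hstep2, hEq]
  obtain ⟨hlo, hhi⟩ := abs_le.mp hlogabs
  constructor
  · calc Real.exp (-K) ^ (L^2/(b:ℝ))
        = Real.exp (-K * (L^2/(b:ℝ))) := (Real.exp_mul _ _).symm
      _ ≤ Real.exp (Real.log P) := Real.exp_le_exp.mpr (by linarith)
      _ = P := Real.exp_log hPpos
  · calc P = Real.exp (Real.log P) := (Real.exp_log hPpos).symm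
      _ ≤ Real.exp (K * (L^2/(b:ℝ))) := Real.exp_le_exp.mpr (by linarith)
      _ = Real.exp K ^ (L^2/(b:ℝ)) := Real.exp_mul _ _



end PAPaper
end
end

section
/- Let b > 0 and let (M_ℓ)_{ℓ≥0} be a real-valued discrete-time martingale on a filtered probability space with M_0 deterministic, b/16 ≤ |M_0| ≤ 5b/64, and |M_{ℓ+1} − M_ℓ| ≤ b/64 almost surely for every ℓ ≥ 0. Define ω = inf{ ℓ ≥ 0 : |M_ℓ| ≥ 7b/32 } and γ = inf{ ℓ ≥ 1 : |M_ℓ| ≤ b/32 } (with inf ∅ = ∞). Then for every integer k ≥ 0, P( ω > min{γ, k} ) ≥ 9/13. -/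
open MeasureTheory Filter Set
open scoped ENNReal NNReal ENat Classical

noncomputable section

namespace PAPaper

/-- The first time `ℓ ≥ 0` at which `|M_ℓ| ≥ c` (with value `⊤` if this never happens). -/
def firstAbsGE {Ω : Type*} (c : ℝ) (M : ℕ → Ω → ℝ) (x : Ω) : ℕ∞ :=
  sInf {t : ℕ∞ | ∃ ℓ : ℕ, t = (ℓ : ℕ∞) ∧ c ≤ |M ℓ x|}

/-- The first time `ℓ ≥ 1` at which `|M_ℓ| ≤ c` (with value `⊤` if this never happens). -/
def firstAbsLE {Ω : Type*} (c : ℝ) (M : ℕ → Ω → ℝ) (x : Ω) : ℕ∞ :=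
  sInf {t : ℕ∞ | ∃ ℓ : ℕ, t = (ℓ : ℕ∞) ∧ 1 ≤ ℓ ∧ |M ℓ x| ≤ c}

/-- optional-stopping estimate: a martingale with increments at most `b/64`
started with `b/16 ≤ |M_0| ≤ 5b/64` returns below `b/32` in absolute value before
exceeding `7b/32` (or before time `k`), with probability at least `9/13`. -/
theorem optional_stopping_estimate
    (b : ℝ) (hb : 0 < b)
    (Ω : Type) [mΩ : MeasurableSpace Ω] (μ : Measure Ω) [IsProbabilityMeasure μ]
    (ℱ : Filtration ℕ mΩ) (M : ℕ → Ω → ℝ) (hM : Martingale M ℱ μ)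
    (m0 : ℝ) (hM0 : ∀ x, M 0 x = m0) (hm0l : b / 16 ≤ |m0|) (hm0u : |m0| ≤ 5 * b / 64)
    (hstep : ∀ ℓ : ℕ, ∀ᵐ x ∂μ, |M (ℓ + 1) x - M ℓ x| ≤ b / 64)
    (k : ℕ) :
    (9 : ℝ≥0∞) / 13 ≤
      μ {x | min (firstAbsLE (b / 32) M x) (k : ℕ∞) < firstAbsGE (7 * b / 32) M x} := by
  classical
  set ε : ℝ := if 0 ≤ m0 then 1 else -1 with hε
  have hεabs : ∀ y : ℝ, |ε * y| = |y| := by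
    intro y
    rcases le_or_gt 0 m0 with h | h
    · simp [hε, h]
    · simp [hε, not_le.2 h]
  have hεm0 : ε * m0 = |m0| := by
    rcases le_or_gt 0 m0 with h | h
    · simp [hε, h, abs_of_nonneg h]
    · simp [hε, not_le.2 h, abs_of_neg h]
  set u : ℕ → Ω → ℝ := fun ℓ x => |M ℓ x| with hu
  set s : Set ℝ := Set.Iic (b / 32) ∪ Set.Ici (7 * b / 32) with hs
  have hs_meas : MeasurableSet s := measurableSet_Iic.union measurableSet_Ici
  have hu_adapted : Adapted ℱ u := by
    intro i
    simpa [hu, Real.norm_eq_abs] using (hM.stronglyAdapted i).norm.measurable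
  set τ : Ω → ℕ := hittingBtwn u s 0 k with hτdef
  set τ' : Ω → ℕ∞ := fun x => (τ x : ℕ∞) with hτ'def
  have hτ : IsStoppingTime ℱ τ' := Adapted.isStoppingTime_hittingBtwn hu_adapted hs_meas
  have hτ_le : ∀ x, τ x ≤ k := fun x => hittingBtwn_le x
  have hτ'_le : ∀ x, τ' x ≤ k := fun x => by simp only [hτ'def]; exact_mod_cast hτ_le x
  have hMmeas : ∀ ℓ, Measurable (M ℓ) := fun ℓ => ((hM.stronglyAdapted ℓ).measurable).le (ℱ.le ℓ)
  -- key pointwise estimate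
  have key : ∀ x, (∀ ℓ, |M (ℓ + 1) x - M ℓ x| ≤ b / 64) →
      ∀ ℓ, ℓ ≤ τ x → b / 64 < ε * M ℓ x := by
    intro x hinc ℓ
    induction ℓ with
    | zero =>
      intro _
      rw [hM0, hεm0]
      linarith
    | succ ℓ ih =>
      intro hℓ
      have hlt : ℓ < τ x := lt_of_lt_of_le (Nat.lt_succ_self ℓ) hℓ
      have hnot : u ℓ x ∉ s := notMem_of_lt_hittingBtwn hlt (Nat.zero_le ℓ)
      have hnot' : ¬(|M ℓ x| ≤ b / 32 ∨ 7 * b / 32 ≤ |M ℓ x|) := by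
        simpa [hu, hs] using hnot
      push_neg at hnot'
      have h32 : b / 32 < |M ℓ x| := hnot'.1
      have hIH := ih (le_of_lt hlt)
      have hpos : 0 < ε * M ℓ x := lt_trans (by linarith) hIH
      have habs : ε * M ℓ x = |M ℓ x| := by
        calc ε * M ℓ x = |ε * M ℓ x| := (abs_of_pos hpos).symm
          _ = |M ℓ x| := hεabs _
      have h1 : |ε * (M (ℓ + 1) x - M ℓ x)| ≤ b / 64 := by rw [hεabs]; exact hinc ℓ
      have h2 := neg_abs_le (ε * (M (ℓ + 1) x - M ℓ x))
      have h3 : ε * M (ℓ + 1) x - ε * M ℓ x = ε * (M (ℓ + 1) x - M ℓ x) := by ring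
      linarith
  -- the bad event
  set A : Set Ω := {x | 7 * b / 32 ≤ |M (τ x) x|} with hA
  have hA_meas : MeasurableSet A := by
    have hAeq : A = ⋃ ℓ ∈ Finset.range (k + 1), ({x | τ x = ℓ} ∩ {x | 7 * b / 32 ≤ |M ℓ x|}) := by
      ext x
      simp only [hA, Set.mem_iUnion, Set.mem_inter_iff, Set.mem_setOf_eq, Finset.mem_range]
      constructor
      · intro h; exact ⟨τ x, Nat.lt_succ_of_le (hτ_le x), rfl, h⟩
      · rintro ⟨ℓ, -, rfl, h⟩; exact h
    rw [hAeq]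
    refine MeasurableSet.biUnion (Finset.range (k + 1)).countable_toSet fun ℓ _ => ?_
    exact (ℱ.le ℓ _ (by convert hτ.measurableSet_eq ℓ using 1; ext x; simp only [hτ'def, Set.mem_setOf_eq]; exact ⟨fun h => by rw [h]; rfl, fun h => WithTop.coe_injective h⟩)).inter
      (measurableSet_le measurable_const (hMmeas ℓ).abs)
  -- optional stopping: expectation of the stopped value is m0
  have hY_int : Integrable (stoppedValue M τ') μ :=
    hM.submartingale.integrable_stoppedValue hτ hτ'_le
  have h0st : IsStoppingTime ℱ (fun _ : Ω => 0) := isStoppingTime_const ℱ 0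
  have hsv0 : stoppedValue M (fun _ : Ω => 0) = fun _ => m0 := by
    funext x; simp [stoppedValue, hM0]
  have hsvneg : stoppedValue (-M) τ' = -(stoppedValue M τ') := by
    funext x; simp [stoppedValue]
  have hint0 : ∫ x, stoppedValue M (fun _ : Ω => 0) x ∂μ = m0 := by
    rw [hsv0]; simp
  have hle1 := hM.submartingale.expected_stoppedValue_mono h0st hτ
    (fun x => WithTop.coe_le_coe.2 (Nat.zero_le _)) hτ'_le
  have hle2 := hM.neg.submartingale.expected_stoppedValue_mono h0st hτ
    (fun x => WithTop.coe_le_coe.2 (Nat.zero_le _)) hτ'_le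
  have hsvneg0 : stoppedValue (-M) (fun _ : Ω => 0) = -(stoppedValue M (fun _ : Ω => 0)) := by
    funext x; simp [stoppedValue]
  rw [hsvneg, hsvneg0] at hle2
  simp only [Pi.neg_apply] at hle2
  rw [integral_neg, integral_neg, neg_le_neg_iff] at hle2
  rw [hint0] at hle1
  rw [hint0] at hle2
  have hEY : ∫ x, stoppedValue M τ' x ∂μ = m0 := le_antisymm hle2 hle1
  -- the scaled stopped value
  set Z : Ω → ℝ := fun x => ε * stoppedValue M τ' x with hZ
  have hZ_int : Integrable Z μ := hY_int.const_mul ε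
  have hEZ : ∫ x, Z x ∂μ = |m0| := by
    simp only [hZ]
    rw [integral_const_mul, hEY, hεm0]
  set g : Ω → ℝ := fun x => b / 64 + A.indicator (fun _ => 13 * b / 64) x with hg
  have hg_int : Integrable g μ :=
    (integrable_const (b / 64)).add ((integrable_const (13 * b / 64)).indicator hA_meas)
  have hEg : ∫ x, g x ∂μ = b / 64 + (13 * b / 64) * (μ A).toReal := by
    simp only [hg]
    rw [integral_add (integrable_const _) ((integrable_const _).indicator hA_meas),
      integral_const, integral_indicator_const _ hA_meas]
    simp [mul_comm, measureReal_def]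
  have hinc_ae : ∀ᵐ x ∂μ, ∀ ℓ, |M (ℓ + 1) x - M ℓ x| ≤ b / 64 := ae_all_iff.2 hstep
  have hgZ : g ≤ᵐ[μ] Z := by
    filter_upwards [hinc_ae] with x hx
    have hkey : b / 64 < ε * M (τ x) x := key x hx (τ x) le_rfl
    have hZx : Z x = ε * M (τ x) x := rfl
    by_cases hxA : x ∈ A
    · have h7 : 7 * b / 32 ≤ |M (τ x) x| := hxA
      have hpos : 0 < ε * M (τ x) x := lt_trans (by linarith) hkey
      have habs : ε * M (τ x) x = |M (τ x) x| := by
        calc ε * M (τ x) x = |ε * M (τ x) x| := (abs_of_pos hpos).symm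
          _ = |M (τ x) x| := hεabs _
      have : g x = b / 64 + 13 * b / 64 := by simp [hg, Set.indicator_of_mem hxA]
      rw [this, hZx, habs]; linarith
    · have : g x = b / 64 := by simp [hg, Set.indicator_of_notMem hxA]
      rw [this, hZx]; linarith
  have hmono := integral_mono_ae hg_int hZ_int hgZ
  rw [hEg, hEZ] at hmono
  have htA : (μ A).toReal ≤ 4 / 13 := by nlinarith [hmono, hm0u, hb]
  have hμA : μ A ≤ 4 / 13 := by
    rw [← ENNReal.ofReal_toReal (measure_ne_top μ A)]
    calc ENNReal.ofReal (μ A).toReal ≤ ENNReal.ofReal (4 / 13) :=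
          ENNReal.ofReal_le_ofReal htA
      _ = 4 / 13 := by
          rw [ENNReal.ofReal_div_of_pos (by norm_num)]
          norm_num
  -- the complement of A is (a.e.) contained in the target event
  have hsubset : ∀ᵐ x ∂μ, x ∈ Aᶜ →
      x ∈ {x | min (firstAbsLE (b / 32) M x) (k : ℕ∞) < firstAbsGE (7 * b / 32) M x} := by
    filter_upwards [hinc_ae] with x hx hxc
    have hxc' : |M (τ x) x| < 7 * b / 32 := not_le.1 hxc
    have f1 : ∀ ℓ, ℓ ≤ τ x → |M ℓ x| < 7 * b / 32 := by
      intro ℓ hℓ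
      rcases eq_or_lt_of_le hℓ with h | h
      · rw [h]; exact hxc'
      · have hnot : u ℓ x ∉ s := notMem_of_lt_hittingBtwn h (Nat.zero_le ℓ)
        have : ¬(|M ℓ x| ≤ b / 32 ∨ 7 * b / 32 ≤ |M ℓ x|) := by simpa [hu, hs] using hnot
        push_neg at this
        exact this.2
    have f2 : min (firstAbsLE (b / 32) M x) (k : ℕ∞) ≤ (τ x : ℕ∞) := by
      by_cases hex : ∃ j ∈ Set.Icc 0 k, u j x ∈ s
      · have hmem : u (τ x) x ∈ s := hittingBtwn_mem_set hex
        have h2 : |M (τ x) x| ≤ b / 32 := by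
          rcases hmem with h | h
          · exact h
          · exact absurd h (not_le.2 hxc')
        have hτpos : 1 ≤ τ x := by
          rcases Nat.eq_zero_or_pos (τ x) with h0 | h
          · exfalso
            have h00 : u 0 x ∈ s := h0 ▸ hmem
            have : |m0| ≤ b / 32 ∨ 7 * b / 32 ≤ |m0| := by simpa [hu, hs, hM0] using h00
            rcases this with h' | h' <;> linarith
          · exact h
        have hγ : firstAbsLE (b / 32) M x ≤ (τ x : ℕ∞) :=
          sInf_le ⟨τ x, rfl, hτpos, h2⟩
        exact le_trans (min_le_left _ _) hγ
      · have hτk : τ x = k := by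
          rw [hτdef, hittingBtwn_def]
          simp only [if_neg hex]
        rw [hτk]
        exact min_le_right _ _
    have f3 : (τ x : ℕ∞) < firstAbsGE (7 * b / 32) M x := by
      have hallgt : ∀ t ∈ {t : ℕ∞ | ∃ ℓ : ℕ, t = (ℓ : ℕ∞) ∧ 7 * b / 32 ≤ |M ℓ x|},
          (τ x : ℕ∞) + 1 ≤ t := by
        rintro t ⟨ℓ, rfl, hc⟩
        have hτℓ : τ x < ℓ := by
          by_contra h
          push_neg at h
          exact absurd hc (not_le.2 (f1 ℓ h))
        exact_mod_cast Nat.succ_le_of_lt hτℓ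
      have h1 : (τ x : ℕ∞) + 1 ≤ firstAbsGE (7 * b / 32) M x := le_sInf hallgt
      exact lt_of_lt_of_le (by exact_mod_cast Nat.lt_succ_self (τ x)) h1
    exact lt_of_le_of_lt f2 f3
  have hmono2 : μ Aᶜ ≤
      μ {x | min (firstAbsLE (b / 32) M x) (k : ℕ∞) < firstAbsGE (7 * b / 32) M x} :=
    measure_mono_ae hsubset
  have hcompl : μ Aᶜ = 1 - μ A := prob_compl_eq_one_sub hA_meas
  refine le_trans ?_ hmono2
  rw [hcompl]
  refine ENNReal.le_sub_of_add_le_right (measure_ne_top μ A) ?_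
  calc (9 : ℝ≥0∞) / 13 + μ A ≤ 9 / 13 + 4 / 13 := add_le_add le_rfl hμA
    _ = 13 / 13 := by rw [ENNReal.div_add_div_same]; norm_num
    _ = 1 := ENNReal.div_self (by norm_num) (by norm_num)

end PAPaper
end
end

section
/- Let b > 0 and 0 < c ≤ min{ b/128, √b/64 }. Let (M_ℓ)_{ℓ≥0} be a real-valued discrete-time martingale with M_0 = 0 almost surely and |M_{ℓ+1} − M_ℓ| ≤ 2c almost surely for every ℓ ≥ 0, and let ω = inf{ ℓ ≥ 0 : |M_ℓ| ≥ 7b/32 } (inf ∅ = ∞). Then for every integer k ≥ 1, P( ω > k ) ≥ (9/13)^{ k/√b + 1 }. -/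
open MeasureTheory Filter Set
open scoped ENNReal NNReal ENat Classical

noncomputable section

namespace PAPaper

open Real


lemma sin_mul_le (p q : ℝ) (hp : 0 ≤ p) (hpq : p ≤ q) (hq : q ≤ π) :
    p * Real.sin q ≤ q * Real.sin p := by
  rcases eq_or_lt_of_le (hp.trans hpq) with h | hq0
  · have hp0 : p = 0 := le_antisymm (hpq.trans h.symm.le) hp
    simp [← h, hp0]
  · have h1 : (p / q) • Real.sin q + (1 - p / q) • Real.sin 0 ≤ Real.sin ((p / q) • q + (1 - p / q) • (0:ℝ)) := by
      apply strictConcaveOn_sin_Icc.concaveOn.2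
      · exact ⟨hp.trans hpq, hq⟩
      · exact ⟨le_rfl, Real.pi_pos.le⟩
      · positivity
      · have : p / q ≤ 1 := div_le_one_of_le₀ hpq hq0.le
        linarith
      · ring
    have h2 : (p / q) • q + (1 - p / q) • (0:ℝ) = p := by
      rw [smul_eq_mul, smul_eq_mul, mul_zero, add_zero]; exact div_mul_cancel₀ p hq0.ne'
    rw [h2, Real.sin_zero] at h1
    simp only [smul_eq_mul, mul_zero, add_zero] at h1
    have h3 : p / q * Real.sin q * q ≤ Real.sin p * q :=
      mul_le_mul_of_nonneg_right h1 hq0.le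
    have h4 : p / q * Real.sin q * q = p * Real.sin q := by field_simp
    nlinarith [h3, h4]

set_option maxHeartbeats 2000000 in
/-- Core deterministic chord inequality, nonnegative-`u` version. -/
lemma core' (δ u v : ℝ) (hδ0 : 0 < δ) (hδ : δ ≤ π/4) (hu0 : 0 ≤ u) (hu : u < π/2)
    (hv : |v - u| ≤ δ) :
    Real.cos δ * Real.cos u - Real.sin δ/δ * (Real.sin u * (v - u)) ≤ max (Real.cos v) 0 := by
  have hvl : u - δ ≤ v := by cases' abs_le.mp hv with h1 h2; linarith
  have hvr : v ≤ u + δ := by cases' abs_le.mp hv with h1 h2; linarith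
  have hπ : (0:ℝ) < π := Real.pi_pos
  have hccos := strictConcaveOn_cos_Icc.concaveOn
  obtain ⟨K, hKdef⟩ : ∃ K : ℝ, K = Real.sin δ/δ := ⟨_, rfl⟩
  rw [← hKdef]
  have hKδ : K * δ = Real.sin δ := by rw [hKdef]; exact div_mul_cancel₀ _ hδ0.ne'
  have hK0 : 0 ≤ K := by
    rw [hKdef]
    apply div_nonneg _ hδ0.le
    exact Real.sin_nonneg_of_nonneg_of_le_pi hδ0.le (by linarith)
  rcases le_or_gt (u + δ) (π/2) with hA | hB
  · -- whole window inside [-(π/2), π/2]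
    have hx : u - δ ∈ Set.Icc (-(π/2)) (π/2) := by constructor <;> nlinarith
    have hy : u + δ ∈ Set.Icc (-(π/2)) (π/2) := by constructor <;> nlinarith
    have ht0 : 0 ≤ (u + δ - v)/(2*δ) := by
      apply div_nonneg _ (by positivity); linarith
    have ht1 : 0 ≤ (v - (u - δ))/(2*δ) := by
      apply div_nonneg _ (by positivity); linarith
    have hsum : (u + δ - v)/(2*δ) + (v - (u - δ))/(2*δ) = 1 := by
      rw [← add_div, div_eq_one_iff_eq (by positivity)]; ring
    have hc := hccos.2 hx hy ht0 ht1 hsum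
    have hpt : ((u + δ - v)/(2*δ)) • (u - δ) + ((v - (u - δ))/(2*δ)) • (u + δ) = v := by
      simp only [smul_eq_mul]
      rw [div_mul_eq_mul_div, div_mul_eq_mul_div, ← add_div,
        div_eq_iff (by positivity : (2*δ) ≠ 0)]
      ring
    rw [hpt] at hc
    simp only [smul_eq_mul] at hc
    have hch : ((u + δ - v)/(2*δ)) * Real.cos (u-δ) + ((v - (u - δ))/(2*δ)) * Real.cos (u+δ)
        = Real.cos δ * Real.cos u - K * (Real.sin u * (v - u)) := by
      rw [Real.cos_sub, Real.cos_add, ← hKδ]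
      field_simp
      ring
    rw [hch] at hc
    exact hc.trans (le_max_left _ _)
  · -- boundary case
    obtain ⟨t, htdef⟩ : ∃ t : ℝ, t = π/2 - u := ⟨_, rfl⟩
    have hudef : u = π/2 - t := by rw [htdef]; ring
    have ht00 : 0 < t := by rw [htdef]; linarith
    have ht0δ : t < δ := by rw [htdef]; linarith
    have hcu : Real.cos u = Real.sin t := by rw [hudef, Real.cos_pi_div_two_sub]
    have hsu : Real.sin u = Real.cos t := by rw [hudef, Real.sin_pi_div_two_sub]
    have hkey : Real.cos δ * Real.cos u ≤ K * (Real.sin u * t) := by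
      have hs := sin_mul_le (δ - t) (δ + t) (by linarith) (by linarith) (by nlinarith)
      rw [Real.sin_add, Real.sin_sub] at hs
      have h2 : δ * (Real.cos δ * Real.sin t) ≤ t * (Real.sin δ * Real.cos t) := by nlinarith [hs]
      rw [hcu, hsu, hKdef, div_mul_eq_mul_div, le_div_iff₀ hδ0]
      nlinarith [h2]
    have hkey' : Real.cos δ * Real.cos u ≤ K * (Real.sin u * (π/2 - u)) := by
      rw [← htdef]; exact hkey
    rcases le_or_gt v (π/2) with hC | hD
    · -- v still in the concavity range: compare with the chord to (π/2, 0)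
      obtain ⟨D, hDdef⟩ : ∃ D : ℝ, D = π/2 - u + δ := ⟨_, rfl⟩
      have hD0 : 0 < D := by rw [hDdef]; linarith
      have hx : u - δ ∈ Set.Icc (-(π/2)) (π/2) := by constructor <;> nlinarith
      have hy : π/2 ∈ Set.Icc (-(π/2)) (π/2) := by constructor <;> nlinarith
      have ht0 : 0 ≤ (π/2 - v)/D := by apply div_nonneg _ hD0.le; linarith
      have ht1 : 0 ≤ (v - (u - δ))/D := by apply div_nonneg _ hD0.le; linarith
      have hsum : (π/2 - v)/D + (v - (u - δ))/D = 1 := by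
        rw [← add_div, div_eq_one_iff_eq hD0.ne', hDdef]; ring
      have hc := hccos.2 hx hy ht0 ht1 hsum
      have hpt : ((π/2 - v)/D) • (u - δ) + ((v - (u - δ))/D) • (π/2) = v := by
        simp only [smul_eq_mul]
        rw [div_mul_eq_mul_div, div_mul_eq_mul_div, ← add_div, div_eq_iff hD0.ne', hDdef]
        ring
      rw [hpt] at hc
      simp only [smul_eq_mul, Real.cos_pi_div_two, mul_zero, add_zero] at hc
      have hc' : (π/2 - v) * Real.cos (u - δ) ≤ D * Real.cos v := by
        have h3 := mul_le_mul_of_nonneg_right hc hD0.le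
        have e : (π/2 - v)/D * Real.cos (u - δ) * D = (π/2 - v) * Real.cos (u - δ) := by
          field_simp
        rw [e] at h3
        linarith [h3]
      have hidD : D * (Real.cos δ * Real.cos u - K * (Real.sin u * (v - u)))
          = (π/2 - v) * Real.cos (u - δ)
            - (v - (u - δ)) * (K * (Real.sin u * (π/2 - u)) - Real.cos δ * Real.cos u) := by
        rw [hDdef, Real.cos_sub, ← hKδ]; ring
      have hprod : 0 ≤ (v - (u - δ)) * (K * (Real.sin u * (π/2 - u)) - Real.cos δ * Real.cos u) := by
        apply mul_nonneg (by linarith)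
        linarith [hkey']
      have hfin : Real.cos δ * Real.cos u - K * (Real.sin u * (v - u)) ≤ Real.cos v := by
        have hDc : D * (Real.cos δ * Real.cos u - K * (Real.sin u * (v - u))) ≤ D * Real.cos v := by
          linarith [hidD, hprod, hc']
        exact le_of_mul_le_mul_left hDc hD0
      exact hfin.trans (le_max_left _ _)
    · -- v beyond π/2 : chord is nonpositive there
      have hsu0 : 0 ≤ Real.sin u := Real.sin_nonneg_of_nonneg_of_le_pi hu0 (by linarith)
      have h1 : K * (Real.sin u * (π/2 - u)) ≤ K * (Real.sin u * (v - u)) := by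
        apply mul_le_mul_of_nonneg_left _ hK0
        apply mul_le_mul_of_nonneg_left _ hsu0
        linarith
      have hfin : Real.cos δ * Real.cos u - K * (Real.sin u * (v - u)) ≤ 0 := by
        linarith [hkey', h1]
      exact hfin.trans (le_max_right _ _)

/-- Core deterministic chord inequality. -/
lemma core (δ u v : ℝ) (hδ0 : 0 < δ) (hδ : δ ≤ π/4) (hu : |u| < π/2)
    (hv : |v - u| ≤ δ) :
    Real.cos δ * Real.cos u - Real.sin δ/δ * (Real.sin u * (v - u)) ≤ max (Real.cos v) 0 := by
  rcases le_or_gt 0 u with h | h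
  · exact core' δ u v hδ0 hδ h (abs_lt.mp hu).2 hv
  · have h2 := core' δ (-u) (-v) hδ0 hδ (by linarith) (by cases' abs_lt.mp hu with h1 h2; linarith)
      (by rw [show -v - -u = -(v - u) by ring, abs_neg]; exact hv)
    simp only [Real.cos_neg, Real.sin_neg] at h2
    calc Real.cos δ * Real.cos u - Real.sin δ/δ * (Real.sin u * (v - u))
        = Real.cos δ * Real.cos u - Real.sin δ/δ * (-Real.sin u * (-v - -u)) := by ring
      _ ≤ max (Real.cos v) 0 := h2


set_option maxHeartbeats 1000000 in
lemma numeric_aux (s δ : ℝ) (hs : 0 < s) (hδ0 : 0 < δ) (h28 : δ ≤ π/28)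
    (h14 : δ ≤ π/(14*s)) :
    ((9:ℝ)/13) ^ ((1:ℝ)/s) ≤ Real.cos δ := by
  have hπ : (0:ℝ) < π := Real.pi_pos
  have hπ4 : π ≤ 4 := Real.pi_le_four
  have hL : (4:ℝ)/13 ≤ Real.log (13/9) := by
    rw [Real.le_log_iff_exp_le (by norm_num)]
    have h := Real.add_one_le_exp (-(4/13 : ℝ))
    have h2 : Real.exp (4/13 : ℝ) * Real.exp (-(4/13 : ℝ)) = 1 := by
      rw [← Real.exp_add]; norm_num
    nlinarith [Real.exp_pos (4/13 : ℝ), Real.exp_pos (-(4/13) : ℝ)]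
  have hL' : Real.log (13/9) ≤ 4/9 := by
    have := Real.log_le_sub_one_of_pos (by norm_num : (0:ℝ) < 13/9)
    linarith
  have hLpos : (0:ℝ) < Real.log (13/9) := lt_of_lt_of_le (by norm_num) hL
  have hform : ((9:ℝ)/13) ^ ((1:ℝ)/s) = Real.exp (-(Real.log (13/9)/s)) := by
    rw [Real.rpow_def_of_pos (by norm_num : (0:ℝ) < 9/13)]
    congr 1
    rw [show (9:ℝ)/13 = ((13:ℝ)/9)⁻¹ by norm_num, Real.log_inv]
    ring
  rw [hform]
  obtain ⟨t, htdef⟩ : ∃ t : ℝ, t = Real.log (13/9)/s := ⟨_, rfl⟩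
  rw [← htdef]
  have ht0 : 0 < t := htdef ▸ div_pos hLpos hs
  have hts : t * s = Real.log (13/9) := by rw [htdef]; field_simp
  have hexp : Real.exp (-t) ≤ 1/(1+t) := by
    rw [Real.exp_neg, one_div]
    exact inv_anti₀ (by linarith) (by linarith [Real.add_one_le_exp t])
  have hcosb : 1 - δ^2/2 ≤ Real.cos δ := Real.one_sub_sq_div_two_le_cos
  have hfin : 1/(1+t) ≤ 1 - δ^2/2 := by
    rw [div_le_iff₀ (by linarith : (0:ℝ) < 1+t)]
    rcases le_or_gt s 2 with hs2 | hs2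
    · have hδ17 : δ ≤ 1/7 := by nlinarith
      have hδ2 : δ^2 ≤ 1/49 := by nlinarith
      have ht213 : 2/13 ≤ t := by nlinarith [hts]
      nlinarith [mul_le_mul_of_nonneg_right hδ2 ht0.le]
    · have hδb : δ * s ≤ 2/7 := by
        have h1 : δ ≤ 4/(14*s) := by
          refine h14.trans ?_
          gcongr
        have h2 : δ * (14*s) ≤ 4 := by
          rw [← le_div_iff₀ (by positivity)] ; exact h1
        linarith
      have hB : δ^2 * s^2 ≤ 4/49 := by nlinarith [hδ0.le, mul_pos hδ0 hs]
      have htle : t ≤ 2/9 := by nlinarith [hts]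
      have hA : (8:ℝ)/13 ≤ t * s^2 := by nlinarith [hts, mul_pos ht0 hs]
      have h1s : (0:ℝ) < s^2 := by positivity
      have h3 : δ^2 * s^2 * t ≤ 8/441 := by
        have e1 : δ^2*s^2*t ≤ (4/49)*t := mul_le_mul_of_nonneg_right hB ht0.le
        have e2 : (4/49)*t ≤ (4/49)*(2/9) := by linarith
        linarith
      have h4 : 0 ≤ t*s^2 - δ^2*s^2/2 - δ^2*s^2*t/2 := by linarith [hA, hB, h3]
      have key : 0 ≤ t - δ^2/2 - δ^2*t/2 := by nlinarith [h4, h1s]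
      nlinarith [key]
  linarith [hexp, hfin, hcosb]


set_option maxHeartbeats 2000000 in
lemma submart_bound {Ω : Type} [mΩ : MeasurableSpace Ω] (μ : Measure Ω) [IsProbabilityMeasure μ]
    (ℱ : Filtration ℕ mΩ) (M : ℕ → Ω → ℝ) (hM : Martingale M ℱ μ)
    (a θ c : ℝ) (ha : 0 < a) (hθ0 : 0 < θ) (hc : 0 < c) (hθa : θ * a = π/2)
    (hδ4 : 2*θ*c ≤ π/4)
    (hM0 : ∀ᵐ x ∂μ, M 0 x = 0)
    (hstep : ∀ ℓ : ℕ, ∀ᵐ x ∂μ, |M (ℓ + 1) x - M ℓ x| ≤ 2 * c)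
    (k : ℕ) :
    Real.cos (2*θ*c) ^ k ≤ (μ {x | ∀ j ≤ k, |M j x| < a}).toReal := by
  have hπ : (0:ℝ) < π := Real.pi_pos
  obtain ⟨δ, hδdef⟩ : ∃ δ : ℝ, δ = 2*θ*c := ⟨_, rfl⟩
  rw [← hδdef]
  rw [← hδdef] at hδ4
  have hδ0 : 0 < δ := by rw [hδdef]; positivity
  obtain ⟨A, hAdef⟩ : ∃ A : ℕ → Set Ω, A = fun n => {x | ∀ j ≤ n, |M j x| < a} := ⟨_, rfl⟩
  rw [show {x | ∀ j ≤ k, |M j x| < a} = A k by rw [hAdef]]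
  have hmem : ∀ n x, x ∈ A n ↔ ∀ j ≤ n, |M j x| < a := by
    intro n x; rw [hAdef]; exact Iff.rfl
  obtain ⟨G, hGdef⟩ : ∃ G : ℕ → Ω → ℝ,
      G = fun n x => max (Real.cos (θ * M n x)) 0 := ⟨_, rfl⟩
  have hGeq : ∀ n x, G n x = max (Real.cos (θ * M n x)) 0 := fun n x => by
    simp only [hGdef]
  obtain ⟨Z, hZdef⟩ : ∃ Z : ℕ → Ω → ℝ, Z = fun n => (A n).indicator (G n) := ⟨_, rfl⟩
  have hZeq' : ∀ n, Z n = (A n).indicator (G n) := fun n => by simp only [hZdef]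
  -- measurability facts
  have hMm : ∀ j : ℕ, Measurable (M j) := fun j => ((hM.stronglyAdapted j).mono (ℱ.le j)).measurable
  have hAF : ∀ n, MeasurableSet[ℱ n] (A n) := by
    intro n
    have h1 : A n = ⋂ j, ⋂ (_ : j ≤ n), {x | |M j x| < a} := by
      ext x; simp [hAdef]
    rw [h1]
    refine MeasurableSet.iInter fun j => MeasurableSet.iInter fun hj => ?_
    have hsm : StronglyMeasurable[ℱ n] (M j) := (hM.stronglyAdapted j).mono (ℱ.mono hj)
    have h2 : StronglyMeasurable[ℱ n] fun x => |M j x| :=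
      continuous_abs.comp_stronglyMeasurable hsm
    exact h2.measurable measurableSet_Iio
  have hAm : ∀ n, MeasurableSet (A n) := fun n => ℱ.le n _ (hAF n)
  have hGm : ∀ n, Measurable (G n) := by
    intro n
    rw [hGdef]
    exact (Real.measurable_cos.comp (measurable_const.mul (hMm n))).max measurable_const
  have hG0 : ∀ n x, 0 ≤ G n x := fun n x => by rw [hGeq]; exact le_max_right _ _
  have hG1 : ∀ n x, G n x ≤ 1 := fun n x => by
    rw [hGeq]; exact max_le (Real.cos_le_one _) zero_le_one
  have hZmem : ∀ n x, x ∈ A n → Z n x = max (Real.cos (θ * M n x)) 0 := fun n x hx => by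
    rw [hZeq', Set.indicator_of_mem hx, hGeq]
  have hZnot : ∀ n x, x ∉ A n → Z n x = 0 := fun n x hx => by
    rw [hZeq']; exact Set.indicator_of_notMem hx _
  have hZm : ∀ n, Measurable (Z n) := fun n => by
    rw [hZeq']; exact (hGm n).indicator (hAm n)
  have hZ0 : ∀ n x, 0 ≤ Z n x := fun n x => by
    rw [hZeq']; exact Set.indicator_nonneg (fun y _ => hG0 n y) x
  have hZ1 : ∀ n x, Z n x ≤ 1 := fun n x => by
    rw [hZeq']
    exact Set.indicator_le' (fun y _ => hG1 n y) (fun _ _ => zero_le_one) x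
  have hZint : ∀ n, Integrable (Z n) μ := by
    intro n
    refine (integrable_const (1:ℝ)).mono' (hZm n).aestronglyMeasurable (ae_of_all _ fun x => ?_)
    rw [Real.norm_eq_abs, abs_of_nonneg (hZ0 n x)]
    simpa using hZ1 n x
  -- the one-step submartingale inequality
  have hkey : ∀ n : ℕ, Real.cos δ * ∫ x, Z n x ∂μ ≤ ∫ x, Z (n+1) x ∂μ := by
    intro n
    obtain ⟨h, hhdef⟩ : ∃ h : Ω → ℝ,
        h = (A n).indicator (fun x => Real.sin (θ * M n x)) := ⟨_, rfl⟩
    have hhsmF : StronglyMeasurable[ℱ n] h := by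
      rw [hhdef]
      refine StronglyMeasurable.indicator ?_ (hAF n)
      exact Real.continuous_sin.comp_stronglyMeasurable ((hM.stronglyAdapted n).const_mul θ)
    have hhsm : AEStronglyMeasurable h μ := (hhsmF.mono (ℱ.le n)).aestronglyMeasurable
    have hhb : ∀ x, ‖h x‖ ≤ 1 := by
      intro x; rw [hhdef, Real.norm_eq_abs]
      by_cases hx : x ∈ A n
      · rw [Set.indicator_of_mem hx]
        exact abs_le.mpr ⟨Real.neg_one_le_sin _, Real.sin_le_one _⟩
      · rw [Set.indicator_of_notMem hx]; simp
    have hint1 : Integrable (fun x => h x * M (n+1) x) μ :=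
      (hM.integrable (n+1)).bdd_mul hhsm (ae_of_all _ hhb)
    have hint0 : Integrable (fun x => h x * M n x) μ :=
      (hM.integrable n).bdd_mul hhsm (ae_of_all _ hhb)
    have hmart : ∫ x, h x * M (n+1) x ∂μ = ∫ x, h x * M n x ∂μ := by
      have e1 : μ[h * M (n+1)|ℱ n] =ᵐ[μ] h * μ[M (n+1)|ℱ n] :=
        condExp_mul_of_stronglyMeasurable_left hhsmF (by exact hint1) (hM.integrable (n+1))
      have e2 : h * μ[M (n+1)|ℱ n] =ᵐ[μ] fun x => h x * M n x :=
        (hM.condExp_ae_eq (Nat.le_succ n)).mono fun x hx => by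
          simp only [Pi.mul_apply, hx]
      have e0 : ∫ x, (μ[h * M (n+1)|ℱ n]) x ∂μ = ∫ x, (h * M (n+1)) x ∂μ :=
        integral_condExp (ℱ.le n)
      calc ∫ x, h x * M (n+1) x ∂μ = ∫ x, (μ[h * M (n+1)|ℱ n]) x ∂μ := e0.symm
        _ = ∫ x, h x * M n x ∂μ := integral_congr_ae (e1.trans e2)
    have hintΔ : Integrable (fun x => h x * (M (n+1) x - M n x)) μ := by
      have e : (fun x => h x * (M (n+1) x - M n x))
          = fun x => h x * M (n+1) x - h x * M n x := by funext x; ring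
      rw [e]; exact hint1.sub hint0
    have hΔ : ∫ x, h x * (M (n+1) x - M n x) ∂μ = 0 := by
      have e : (fun x => h x * (M (n+1) x - M n x))
          = fun x => h x * M (n+1) x - h x * M n x := by funext x; ring
      rw [e, integral_sub hint1 hint0, hmart, sub_self]
    obtain ⟨W, hWdef⟩ : ∃ W : Ω → ℝ, W = fun x =>
        Real.cos δ * Z n x - (Real.sin δ/δ * θ) * (h x * (M (n+1) x - M n x)) := ⟨_, rfl⟩
    have hWeq : ∀ x, W x = Real.cos δ * Z n x
        - (Real.sin δ/δ * θ) * (h x * (M (n+1) x - M n x)) := fun x => by simp only [hWdef]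
    have hWint : Integrable W μ := by
      rw [hWdef]; exact ((hZint n).const_mul _).sub (hintΔ.const_mul _)
    have hWit : ∫ x, W x ∂μ = Real.cos δ * ∫ x, Z n x ∂μ := by
      rw [hWdef, integral_sub ((hZint n).const_mul _) (hintΔ.const_mul _),
        integral_const_mul, integral_const_mul, hΔ, mul_zero, sub_zero]
    have hGint : Integrable ((A n).indicator (G (n+1))) μ := by
      refine (integrable_const (1:ℝ)).mono'
        (((hGm (n+1)).indicator (hAm n)).aestronglyMeasurable) (ae_of_all _ fun x => ?_)
      rw [Real.norm_eq_abs,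
        abs_of_nonneg (Set.indicator_nonneg (fun y _ => hG0 (n+1) y) x)]
      simpa using Set.indicator_le' (fun y _ => hG1 (n+1) y) (fun _ _ => zero_le_one) x
    have hae : ∀ᵐ x ∂μ, W x ≤ (A n).indicator (G (n+1)) x := by
      filter_upwards [hstep n] with x hx
      rw [hWeq]
      by_cases hxA : x ∈ A n
      · rw [Set.indicator_of_mem hxA]
        have hMn : |M n x| < a := (hmem n x).mp hxA n le_rfl
        have hu : |θ * M n x| < π/2 := by
          rw [abs_mul, abs_of_pos hθ0, ← hθa]
          exact mul_lt_mul_of_pos_left hMn hθ0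
        have hv : |θ * M (n+1) x - θ * M n x| ≤ δ := by
          rw [show θ * M (n+1) x - θ * M n x = θ * (M (n+1) x - M n x) by ring,
            abs_mul, abs_of_pos hθ0, hδdef]
          calc θ * |M (n+1) x - M n x| ≤ θ * (2*c) :=
                mul_le_mul_of_nonneg_left hx hθ0.le
            _ = 2*θ*c := by ring
        have hcore := core δ (θ * M n x) (θ * M (n+1) x) hδ0 hδ4 hu hv
        have hZx : Z n x = Real.cos (θ * M n x) := by
          rw [hZmem n x hxA]
          exact max_eq_left (Real.cos_nonneg_of_mem_Icc
            ⟨by linarith [(abs_lt.mp hu).1], (abs_lt.mp hu).2.le⟩)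
        have hhx : h x = Real.sin (θ * M n x) := by
          rw [hhdef]; exact Set.indicator_of_mem hxA _
        rw [hZx, hhx, hGeq]
        calc Real.cos δ * Real.cos (θ * M n x)
              - (Real.sin δ/δ * θ) * (Real.sin (θ * M n x) * (M (n+1) x - M n x))
            = Real.cos δ * Real.cos (θ * M n x)
              - Real.sin δ/δ * (Real.sin (θ * M n x) * (θ * M (n+1) x - θ * M n x)) := by
              ring
          _ ≤ max (Real.cos (θ * M (n+1) x)) 0 := hcore
      · rw [Set.indicator_of_notMem hxA, hZnot n x hxA,
          show h x = 0 by rw [hhdef]; exact Set.indicator_of_notMem hxA _]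
        simp
    have hZae : Z (n+1) =ᵐ[μ] (A n).indicator (G (n+1)) := by
      filter_upwards [hstep n] with x hx
      rw [hZeq' (n+1)]
      by_cases h1 : x ∈ A (n+1)
      · have h0 : x ∈ A n := by
          rw [hmem]; intro j hj
          exact (hmem (n+1) x).mp h1 j (hj.trans (Nat.le_succ n))
        rw [Set.indicator_of_mem h1, Set.indicator_of_mem h0]
      · by_cases h0 : x ∈ A n
        · have hub : a ≤ |M (n+1) x| := by
            by_contra hcon
            push_neg at hcon
            refine h1 ((hmem (n+1) x).mpr fun j hj => ?_)
            rcases Nat.lt_succ_iff_lt_or_eq.mp (Nat.lt_succ_of_le hj) with hl | he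
            · exact (hmem n x).mp h0 j (Nat.lt_succ_iff.mp hl)
            · rw [he]; exact hcon
          have hMn : |M n x| < a := (hmem n x).mp h0 n le_rfl
          have habs : |M (n+1) x| ≤ |M n x| + 2*c := by
            have h2 := abs_sub_abs_le_abs_sub (M (n+1) x) (M n x)
            linarith [hx]
          have hcos : Real.cos (θ * M (n+1) x) ≤ 0 := by
            rw [← Real.cos_abs, abs_mul, abs_of_pos hθ0]
            apply Real.cos_nonpos_of_pi_div_two_le_of_le
            · rw [← hθa]; exact mul_le_mul_of_nonneg_left hub hθ0.le
            · have h2 : θ * |M (n+1) x| ≤ θ * |M n x| + δ := by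
                rw [hδdef]
                nlinarith [mul_le_mul_of_nonneg_left habs hθ0.le]
              have h3 : θ * |M n x| ≤ π/2 := by
                rw [← hθa]; exact (mul_le_mul_of_nonneg_left hMn.le hθ0.le)
              linarith
          rw [Set.indicator_of_notMem h1, Set.indicator_of_mem h0, hGeq]
          exact (max_eq_right hcos).symm
        · rw [Set.indicator_of_notMem h1, Set.indicator_of_notMem h0]
    calc Real.cos δ * ∫ x, Z n x ∂μ = ∫ x, W x ∂μ := hWit.symm
      _ ≤ ∫ x, (A n).indicator (G (n+1)) x ∂μ := integral_mono_ae hWint hGint hae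
      _ = ∫ x, Z (n+1) x ∂μ := (integral_congr_ae hZae).symm
  -- induction
  have hcosδ0 : 0 ≤ Real.cos δ :=
    Real.cos_nonneg_of_mem_Icc ⟨by linarith, by linarith⟩
  have hbase : ∫ x, Z 0 x ∂μ = 1 := by
    have he : Z 0 =ᵐ[μ] fun _ => (1:ℝ) := by
      filter_upwards [hM0] with x hx
      have hxA : x ∈ A 0 := by
        rw [hmem]; intro j hj
        have hj0 : j = 0 := Nat.le_zero.mp hj
        rw [hj0, hx, abs_zero]; exact ha
      rw [hZmem 0 x hxA, hx, mul_zero, Real.cos_zero]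
      simp
    rw [integral_congr_ae he]
    simp
  have hind : ∀ n, Real.cos δ ^ n ≤ ∫ x, Z n x ∂μ := by
    intro n
    induction n with
    | zero => simp [hbase]
    | succ m ih =>
      calc Real.cos δ^(m+1) = Real.cos δ * Real.cos δ^m := by ring
        _ ≤ Real.cos δ * ∫ x, Z m x ∂μ := mul_le_mul_of_nonneg_left ih hcosδ0
        _ ≤ ∫ x, Z (m+1) x ∂μ := hkey m
  have hfin : ∫ x, Z k x ∂μ ≤ (μ (A k)).toReal := by
    have hle : ∀ x, Z k x ≤ (A k).indicator (fun _ => (1:ℝ)) x := by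
      intro x
      by_cases hx : x ∈ A k
      · rw [Set.indicator_of_mem hx, hZmem k x hx]
        exact max_le (Real.cos_le_one _) zero_le_one
      · rw [Set.indicator_of_notMem hx, hZnot k x hx]
    calc ∫ x, Z k x ∂μ ≤ ∫ x, (A k).indicator (fun _ => (1:ℝ)) x ∂μ :=
          integral_mono (hZint k) ((integrable_const 1).indicator (hAm k)) hle
      _ = (μ (A k)).toReal := by
          rw [integral_indicator_const (1:ℝ) (hAm k), smul_eq_mul, mul_one, measureReal_def]
  exact (hind k).trans hfin


/-- exit-time lower bound: a martingale started at `0` with increments at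
most `2c`, where `c ≤ min(b/128, √b/64)`, stays below `7b/32` in absolute value up to time
`k` with probability at least `(9/13)^{k/√b + 1}`. -/
theorem martingale_exit_time_lower_bound
    (b c : ℝ) (hb : 0 < b) (hc : 0 < c) (hc' : c ≤ min (b / 128) (Real.sqrt b / 64))
    (Ω : Type) [mΩ : MeasurableSpace Ω] (μ : Measure Ω) [IsProbabilityMeasure μ]
    (ℱ : Filtration ℕ mΩ) (M : ℕ → Ω → ℝ) (hM : Martingale M ℱ μ)
    (hM0 : ∀ᵐ x ∂μ, M 0 x = 0)
    (hstep : ∀ ℓ : ℕ, ∀ᵐ x ∂μ, |M (ℓ + 1) x - M ℓ x| ≤ 2 * c)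
    (k : ℕ) (hk : 1 ≤ k) :
    ENNReal.ofReal ((9 / 13 : ℝ) ^ ((k : ℝ) / Real.sqrt b + 1)) ≤
      μ {x | (k : ℕ∞) < firstAbsGE (7 * b / 32) M x} := by
  have hπ : (0:ℝ) < π := Real.pi_pos
  have hsb : 0 < Real.sqrt b := Real.sqrt_pos.mpr hb
  have hbb : Real.sqrt b * Real.sqrt b = b := Real.mul_self_sqrt hb.le
  have hc1 : c ≤ b/128 := le_trans hc' (min_le_left _ _)
  have hc2 : c ≤ Real.sqrt b/64 := le_trans hc' (min_le_right _ _)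
  obtain ⟨a, hadef⟩ : ∃ a : ℝ, a = 7*b/32 := ⟨_, rfl⟩
  have hgoal : 7 * b / 32 = a := by rw [hadef]
  rw [hgoal]
  have ha0 : 0 < a := by rw [hadef]; positivity
  obtain ⟨θ, hθdef⟩ : ∃ θ : ℝ, θ = π/(2*a) := ⟨_, rfl⟩
  have hθ0 : 0 < θ := by rw [hθdef]; positivity
  have hθa : θ * a = π/2 := by rw [hθdef]; field_simp
  have hδa : (2*θ*c) * a = π * c := by
    rw [hθdef]; field_simp
  have hδ0' : 0 < 2*θ*c := by positivity
  have hδ28 : 2*θ*c ≤ π/28 := by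
    nlinarith [hδa, mul_le_mul_of_nonneg_left hc1 hπ.le, ha0, le_of_eq hadef, ge_of_eq hadef, hb]
  have hδ14 : 2*θ*c ≤ π/(14*Real.sqrt b) := by
    rw [le_div_iff₀ (by positivity)]
    nlinarith [hδa, mul_le_mul_of_nonneg_left hc2 hπ.le, ha0, le_of_eq hadef,
      ge_of_eq hadef, hbb, hsb]
  have hδ4 : 2*θ*c ≤ π/4 := hδ28.trans (by linarith)
  have haux := submart_bound μ ℱ M hM a θ c ha0 hθ0 hc hθa hδ4 hM0 hstep k
  -- numeric chain
  have h3 : ((9:ℝ)/13) ^ ((1:ℝ)/Real.sqrt b) ≤ Real.cos (2*θ*c) :=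
    numeric_aux (Real.sqrt b) (2*θ*c) hsb hδ0' hδ28 hδ14
  have hnum : ((9:ℝ)/13) ^ ((k:ℝ)/Real.sqrt b + 1) ≤ Real.cos (2*θ*c) ^ k := by
    calc ((9:ℝ)/13) ^ ((k:ℝ)/Real.sqrt b + 1)
        ≤ ((9:ℝ)/13) ^ ((k:ℝ)/Real.sqrt b) :=
          Real.rpow_le_rpow_of_exponent_ge (by norm_num) (by norm_num) (by linarith)
      _ = (((9:ℝ)/13) ^ ((1:ℝ)/Real.sqrt b)) ^ k := by
          rw [← Real.rpow_natCast (((9:ℝ)/13) ^ ((1:ℝ)/Real.sqrt b)) k,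
            ← Real.rpow_mul (by norm_num : (0:ℝ) ≤ 9/13)]
          congr 1
          field_simp
      _ ≤ Real.cos (2*θ*c) ^ k :=
          pow_le_pow_left₀ (Real.rpow_nonneg (by norm_num) _) h3 k
  -- set inclusion
  have hsub : {x | ∀ j ≤ k, |M j x| < a} ⊆ {x | (k : ℕ∞) < firstAbsGE a M x} := by
    intro x hx
    have h2 : ((k:ℕ∞) + 1) ≤ firstAbsGE a M x := by
      apply le_sInf
      rintro t ⟨ℓ, rfl, hℓ⟩
      have hℓk : k < ℓ := by
        by_contra hcon
        push_neg at hcon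
        exact absurd hℓ (not_le.mpr (hx ℓ hcon))
      have h4 : ((k+1 : ℕ) : ℕ∞) ≤ (ℓ : ℕ∞) := by
        exact_mod_cast Nat.succ_le_of_lt hℓk
      simpa [Nat.cast_add, Nat.cast_one] using h4
    have h5 : (k:ℕ∞) < (k:ℕ∞) + 1 := by
      rw [show ((k:ℕ∞) + 1) = ((k+1 : ℕ) : ℕ∞) by push_cast; ring]
      exact_mod_cast Nat.lt_succ_self k
    exact lt_of_lt_of_le h5 h2
  refine le_trans (ENNReal.ofReal_le_ofReal (hnum.trans haux)) ?_
  rw [ENNReal.ofReal_toReal (measure_ne_top μ _)]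
  exact measure_mono hsub


end PAPaper
end
end

section
/- Fix an integer m ≥ 2 and a real δ > 0, and set α = m+δ and β_s = (2s−3)m+(s−1)δ. There is a constant C > 1 depending only on m and δ such that for every ζ ∈ (0,1], all integers n, k ≥ 1, every integer s with s ≥ 2 and s ≥ ζn, every integer p ≥ 0, and all integers q_1, q_2 with 0 ≤ q_1, q_2 ≤ k: (β_s+q_1+q_2−1)_{q_1+q_2} / (α+β_s+p+q_1+q_2−1)_{p+q_1+q_2} ≤ C^{ζ^{−2} k² n^{−2}} · ( (β_s+q_1−1)_{q_1} / (α+β_s+p+q_1−1)_{p+q_1} ) · ( (β_s+q_2−1)_{q_2} / (α+β_s+q_2−1)_{q_2} ). -/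
open MeasureTheory Filter Set
open scoped ENNReal NNReal Classical

noncomputable section

namespace PAPaper

lemma ff_rev (x : ℝ) (r : ℕ) : ff (x + r - 1) r = ∏ i ∈ Finset.range r, (x + i) := by
  rw [ff, ← Finset.prod_range_reflect]
  refine Finset.prod_congr rfl fun j hj => ?_
  simp only [Finset.mem_range] at hj
  have h1 : ((r - 1 - j : ℕ) : ℝ) = (r : ℝ) - 1 - (j : ℝ) := by
    rw [Nat.sub_sub, Nat.cast_sub (by omega : 1 + j ≤ r)]
    push_cast; ring
  rw [h1]; ring

lemma div_decouple {a1 b1 p q a2 b2 c : ℝ} (ha1 : 0 ≤ a1) (hb1 : 0 < b1)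
    (hq : 0 < q) (hb2 : 0 < b2) (hkey : p * b2 ≤ c * (a2 * q)) :
    a1 * p / (b1 * q) ≤ c * (a1 / b1) * (a2 / b2) := by
  have h2 : c * (a1 / b1) * (a2 / b2) = (a1 / b1) * (c * a2 / b2) := by ring
  rw [← div_mul_div_comm, h2]
  refine mul_le_mul_of_nonneg_left ?_ (by positivity)
  rw [div_le_div_iff₀ hq hb2]
  linarith

set_option maxHeartbeats 1000000 in
/-- the decoupling inequality for falling-factorial ratios. -/
theorem falling_factorial_decoupling
    (m : ℕ) (hm : 2 ≤ m) (δ : ℝ) (hδ : 0 < δ) :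
    ∃ C : ℝ, 1 < C ∧
      ∀ ζ : ℝ, 0 < ζ → ζ ≤ 1 → ∀ n k : ℕ, 1 ≤ n → 1 ≤ k →
        ∀ s : ℕ, 2 ≤ s → ζ * n ≤ (s : ℝ) →
        ∀ p q1 q2 : ℕ, q1 ≤ k → q2 ≤ k →
          ff (betaC m δ s + q1 + q2 - 1) (q1 + q2) /
              ff (alphaC m δ + betaC m δ s + p + q1 + q2 - 1) (p + q1 + q2) ≤
            C ^ (ζ⁻¹ ^ 2 * (k : ℝ) ^ 2 / (n : ℝ) ^ 2) *
              (ff (betaC m δ s + q1 - 1) q1 /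
                ff (alphaC m δ + betaC m δ s + p + q1 - 1) (p + q1)) *
              (ff (betaC m δ s + q2 - 1) q2 /
                ff (alphaC m δ + betaC m δ s + q2 - 1) q2) := by
  refine ⟨Real.exp (4 / ((m : ℝ) + δ)), ?_, ?_⟩
  · rw [show (1 : ℝ) = Real.exp 0 from (Real.exp_zero).symm]
    apply Real.exp_lt_exp.mpr
    have : (0:ℝ) < (m:ℝ) + δ := by positivity
    positivity
  intro ζ hζ hζ1 n k hn hk s hs2 hsn p q1 q2 hq1 hq2
  set A : ℝ := alphaC m δ with hAdef
  set B : ℝ := betaC m δ s with hBdef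
  have hm' : (2 : ℝ) ≤ m := by exact_mod_cast hm
  have hA0 : 0 < A := by rw [hAdef, alphaC]; positivity
  have hs2' : (2 : ℝ) ≤ s := by exact_mod_cast hs2
  have hn1 : (1 : ℝ) ≤ n := by exact_mod_cast hn
  have hk1 : (1 : ℝ) ≤ k := by exact_mod_cast hk
  have hq1' : (q1 : ℝ) ≤ k := by exact_mod_cast hq1
  have hq2' : (q2 : ℝ) ≤ k := by exact_mod_cast hq2
  have hB1 : A * (ζ * n) / 2 ≤ B := by
    rw [hBdef, betaC, hAdef, alphaC]
    nlinarith [mul_nonneg (by linarith : (0:ℝ) ≤ (s:ℝ) - 2) (le_of_lt hδ),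
      mul_nonneg (by linarith : (0:ℝ) ≤ (s:ℝ) - 2) (by linarith : (0:ℝ) ≤ (m:ℝ)),
      mul_nonneg (by positivity : (0:ℝ) ≤ (m:ℝ) + δ) (by linarith : (0:ℝ) ≤ (s:ℝ) - ζ * n)]
  have hzn : 0 < ζ * n := by positivity
  have hB0 : 0 < B := lt_of_lt_of_le (by positivity) hB1
  have e1 : ff (B + q1 + q2 - 1) (q1 + q2) = ∏ i ∈ Finset.range (q1 + q2), (B + i) := by
    rw [show B + (q1:ℝ) + (q2:ℝ) - 1 = B + ((q1 + q2 : ℕ) : ℝ) - 1 by push_cast; ring, ff_rev]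
  have e2 : ff (A + B + p + q1 + q2 - 1) (p + q1 + q2) =
      ∏ i ∈ Finset.range (p + q1 + q2), (A + B + i) := by
    rw [show A + B + (p:ℝ) + (q1:ℝ) + (q2:ℝ) - 1 = A + B + ((p + q1 + q2 : ℕ) : ℝ) - 1 by
      push_cast; ring, ff_rev]
  have e4 : ff (A + B + p + q1 - 1) (p + q1) = ∏ i ∈ Finset.range (p + q1), (A + B + i) := by
    rw [show A + B + (p:ℝ) + (q1:ℝ) - 1 = A + B + ((p + q1 : ℕ) : ℝ) - 1 by
      push_cast; ring, ff_rev]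
  rw [e1, e2, e4, ff_rev B q1, ff_rev B q2, ff_rev (A + B) q2,
    Finset.prod_range_add (fun i => B + (i:ℝ)) q1 q2,
    Finset.prod_range_add (fun i => A + B + (i:ℝ)) (p + q1) q2]
  set x : ℝ := A * k / B ^ 2 with hx
  have hx0 : 0 ≤ x := by positivity
  refine div_decouple (Finset.prod_nonneg fun i _ => by positivity)
    (Finset.prod_pos fun i _ => by positivity) (Finset.prod_pos fun i _ => by positivity)
    (Finset.prod_pos fun i _ => by positivity) ?_
  have step : ∀ i ∈ Finset.range q2,
      (B + ((q1 + i : ℕ) : ℝ)) * (A + B + (i : ℝ)) ≤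
        (1 + x) * ((B + (i : ℝ)) * (A + B + ((p + q1 + i : ℕ) : ℝ))) := by
    intro i _
    have hi : (0:ℝ) ≤ i := Nat.cast_nonneg i
    have hBB : B * B ≤ (B + (i:ℝ)) * (A + B + ((p + q1 + i : ℕ) : ℝ)) := by
      have : (0:ℝ) ≤ ((p + q1 + i : ℕ) : ℝ) := Nat.cast_nonneg _
      nlinarith
    have hxB : A * k ≤ x * ((B + (i:ℝ)) * (A + B + ((p + q1 + i : ℕ) : ℝ))) := by
      have hEq : x * (B * B) = A * k := by
        rw [hx]; field_simp
      nlinarith [mul_le_mul_of_nonneg_left hBB hx0]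
    push_cast
    push_cast at hxB
    nlinarith [hxB, mul_nonneg (Nat.cast_nonneg p : (0:ℝ) ≤ p) (by linarith : (0:ℝ) ≤ B + i),
      mul_nonneg (by linarith : (0:ℝ) ≤ (k:ℝ) - q1) (le_of_lt hA0)]
  calc (∏ i ∈ Finset.range q2, (B + ((q1 + i : ℕ) : ℝ))) *
        ∏ i ∈ Finset.range q2, (A + B + (i : ℝ))
      = ∏ i ∈ Finset.range q2, ((B + ((q1 + i : ℕ) : ℝ)) * (A + B + (i : ℝ))) :=
        (Finset.prod_mul_distrib).symm
    _ ≤ ∏ i ∈ Finset.range q2,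
          ((1 + x) * ((B + (i : ℝ)) * (A + B + ((p + q1 + i : ℕ) : ℝ)))) :=
        Finset.prod_le_prod (fun i _ => by positivity) step
    _ = (1 + x) ^ q2 * ((∏ i ∈ Finset.range q2, (B + (i : ℝ))) *
          ∏ i ∈ Finset.range q2, (A + B + ((p + q1 + i : ℕ) : ℝ))) := by
        rw [Finset.prod_mul_distrib, Finset.prod_const, Finset.prod_mul_distrib, Finset.card_range]
    _ ≤ Real.exp (4 / ((m : ℝ) + δ)) ^ (ζ⁻¹ ^ 2 * (k : ℝ) ^ 2 / (n : ℝ) ^ 2) *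
          ((∏ i ∈ Finset.range q2, (B + (i : ℝ))) *
          ∏ i ∈ Finset.range q2, (A + B + ((p + q1 + i : ℕ) : ℝ))) := by
        refine mul_le_mul_of_nonneg_right ?_
          (mul_nonneg (Finset.prod_nonneg fun i _ => by positivity)
            (Finset.prod_nonneg fun i _ => by positivity))
        have h1 : (1 + x) ^ q2 ≤ Real.exp x ^ q2 := by
          apply pow_le_pow_left₀ (by positivity)
          linarith [Real.add_one_le_exp x]
        have h2 : Real.exp x ^ q2 = Real.exp ((q2 : ℝ) * x) := (Real.exp_nat_mul x q2).symm
        have hB2 : (A * (ζ * n) / 2) ^ 2 ≤ B ^ 2 := by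
          apply pow_le_pow_left₀ (by positivity) hB1
        have h5 : A * k / B ^ 2 ≤ A * k / ((A * (ζ * n) / 2) ^ 2) :=
          div_le_div_of_nonneg_left (by positivity) (by positivity) hB2
        have h6 : A * k / ((A * (ζ * n) / 2) ^ 2) * k
            = 4 / A * (ζ⁻¹ ^ 2 * (k : ℝ) ^ 2 / (n : ℝ) ^ 2) := by
          field_simp
          ring
        have hfinal : (q2 : ℝ) * x ≤ 4 / A * (ζ⁻¹ ^ 2 * (k : ℝ) ^ 2 / (n : ℝ) ^ 2) := by
          calc (q2 : ℝ) * x ≤ (k : ℝ) * x := mul_le_mul_of_nonneg_right hq2' hx0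
            _ = A * k / B ^ 2 * k := by rw [hx]; ring
            _ ≤ A * k / ((A * (ζ * n) / 2) ^ 2) * k :=
                mul_le_mul_of_nonneg_right h5 (by positivity)
            _ = 4 / A * (ζ⁻¹ ^ 2 * (k : ℝ) ^ 2 / (n : ℝ) ^ 2) := h6
        have hC : Real.exp (4 / ((m : ℝ) + δ)) ^ (ζ⁻¹ ^ 2 * (k : ℝ) ^ 2 / (n : ℝ) ^ 2)
            = Real.exp (4 / A * (ζ⁻¹ ^ 2 * (k : ℝ) ^ 2 / (n : ℝ) ^ 2)) := by
          rw [← Real.exp_mul, hAdef, alphaC]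
        rw [hC]
        calc (1 + x) ^ q2 ≤ Real.exp x ^ q2 := h1
          _ = Real.exp ((q2 : ℝ) * x) := h2
          _ ≤ _ := Real.exp_le_exp.mpr hfinal

end PAPaper
end
end
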